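/- arXiv:math/0005048 — 6 statements merged into one kernel-verified Lean document; each statement's English description precedes it below -/
import Mathlib

section
/- Let $C \subset \mathbb{P}^2$ be the union of $s \geq 2$ distinct lines $l_1, \ldots, l_s$, not all passing through one point. For each line $l_i$ let $k_i$ be the number of singular points of $C$ (i.e., points lying on at least two of the lines) lying on $l_i$, and let $t$ be the total number of singular points. If $t > 1$, then $\sum_{i=1}^s (k_i - 1) \geq t$, with equality if and only if $s = 3$ and $t = 3$. -/
/-- Corollary 3: let `C` be the union of `s ≥ 2` distinct lines
in the projective plane (modelled combinatorially: any two distinct lines meet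
in exactly one point), not all concurrent. Let `S` be the set of singular
points (points on at least two lines), `k i` the number of singular points on
the `i`-th line, and `t = #S > 1`. Then `∑ (k i - 1) ≥ t`, with equality iff
`s = 3` and `t = 3`. -/
theorem sum_ki_sub_one_ge_t {P : Type*} (s : ℕ) (hs : 2 ≤ s)
    (ℓ : Fin s → Set P) (hinj : Function.Injective ℓ)
    (hmeet : ∀ i j : Fin s, i ≠ j → ∃! p : P, p ∈ ℓ i ∧ p ∈ ℓ j)
    (hnc : ¬ ∃ p : P, ∀ i, p ∈ ℓ i)
    (S : Set P) (hS : S = {p : P | 2 ≤ Set.ncard {i : Fin s | p ∈ ℓ i}})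
    (k : Fin s → ℕ) (hk : ∀ i, k i = Set.ncard (S ∩ ℓ i))
    (t : ℕ) (ht : t = S.ncard) (ht1 : 1 < t) :
    (t : ℤ) ≤ ∑ i, ((k i : ℤ) - 1) ∧
      ((∑ i, ((k i : ℤ) - 1)) = (t : ℤ) ↔ s = 3 ∧ t = 3) := by
  classical
  have hi01 : (⟨0, by omega⟩ : Fin s) ≠ ⟨1, by omega⟩ := by simp [Fin.ext_iff]
  have hP : Nonempty P := ⟨(hmeet _ _ hi01).exists.choose⟩
  -- a total "meet" function
  have hmp' : ∀ i j : Fin s, ∃ p : P, i ≠ j →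
      (p ∈ ℓ i ∧ p ∈ ℓ j) ∧ ∀ q, q ∈ ℓ i → q ∈ ℓ j → q = p := by
    intro i j
    by_cases h : i ≠ j
    · obtain ⟨p, hp, hu⟩ := hmeet i j h
      exact ⟨p, fun _ => ⟨hp, fun q h1 h2 => hu q ⟨h1, h2⟩⟩⟩
    · exact ⟨Classical.arbitrary P, fun h' => absurd h' h⟩
  choose mp hmp using hmp'
  -- membership in S
  have memS : ∀ p : P, p ∈ S ↔ 2 ≤ Set.ncard {i : Fin s | p ∈ ℓ i} := by
    intro p; rw [hS]; rfl
  have two_mem_S : ∀ {p : P} {i j : Fin s}, i ≠ j → p ∈ ℓ i → p ∈ ℓ j → p ∈ S := by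
    intro p i j hij hi hj
    rw [memS]
    calc 2 = ({i, j} : Set (Fin s)).ncard := (Set.ncard_pair hij).symm
    _ ≤ Set.ncard {i : Fin s | p ∈ ℓ i} := by
        apply Set.ncard_le_ncard _ (Set.toFinite _)
        intro x hx
        rcases hx with rfl | hx
        · exact hi
        · simp only [Set.mem_singleton_iff] at hx; subst hx; exact hj
  -- every point of S lies on two distinct lines
  have exS : ∀ p ∈ S, ∃ i j : Fin s, i ≠ j ∧ p ∈ ℓ i ∧ p ∈ ℓ j := by
    intro p hp
    rw [memS] at hp
    obtain ⟨i, j, hi, hj, hij⟩ :=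
      (Set.one_lt_ncard_iff (s := {i : Fin s | p ∈ ℓ i}) (Set.toFinite _)).mp (by omega)
    exact ⟨i, j, hij, hi, hj⟩
  -- S is finite
  have hSfin : S.Finite := by
    apply (Set.finite_range (fun q : Fin s × Fin s => mp q.1 q.2)).subset
    intro p hp
    obtain ⟨i, j, hij, hi, hj⟩ := exS p hp
    exact ⟨(i, j), (((hmp i j hij).2 p hi hj)).symm⟩
  set Sf : Finset P := hSfin.toFinset with hSf
  have htc : t = Sf.card := by rw [ht, Set.ncard_eq_toFinset_card _ hSfin]
  have kf : ∀ i, k i = (Sf.filter (fun p => p ∈ ℓ i)).card := by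
    intro i
    rw [hk]
    have h1 : S ∩ ℓ i = ↑(Sf.filter (fun p => p ∈ ℓ i)) := by
      ext p; simp [hSf, Set.Finite.mem_toFinset]
    rw [h1, Set.ncard_coe_finset]
  -- degree of a point as a finset card
  have degf : ∀ p : P, Set.ncard {i : Fin s | p ∈ ℓ i}
      = (Finset.univ.filter (fun i => p ∈ ℓ i)).card := by
    intro p
    have h1 : {i : Fin s | p ∈ ℓ i} = ↑(Finset.univ.filter (fun i => p ∈ ℓ i)) := by
      ext i; simp
    rw [h1, Set.ncard_coe_finset]
  have deg2 : ∀ p ∈ Sf, 2 ≤ (Finset.univ.filter (fun i => p ∈ ℓ i)).card := by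
    intro p hp
    rw [← degf, ← memS]
    exact hSfin.mem_toFinset.mp hp
  -- double counting
  have hswap : ∑ i, k i = ∑ p ∈ Sf, (Finset.univ.filter (fun i => p ∈ ℓ i)).card := by
    calc ∑ i, k i = ∑ i, ∑ p ∈ Sf, if p ∈ ℓ i then 1 else 0 := by
          refine Finset.sum_congr rfl fun i _ => ?_
          rw [kf i, Finset.card_filter]
    _ = ∑ p ∈ Sf, ∑ i, if p ∈ ℓ i then 1 else 0 := Finset.sum_comm
    _ = _ := by
          refine Finset.sum_congr rfl fun p _ => ?_
          rw [Finset.card_filter]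
  -- s ≥ 3
  have hs3 : 3 ≤ s := by
    by_contra h
    have hs2 : s = 2 := by omega
    obtain ⟨⟨hp0, hp1⟩, -⟩ := hmp _ _ hi01
    refine hnc ⟨mp ⟨0, by omega⟩ ⟨1, by omega⟩, fun i => ?_⟩
    have : i = (⟨0, by omega⟩ : Fin s) ∨ i = ⟨1, by omega⟩ := by
      rcases i with ⟨v, hv⟩
      simp only [Fin.ext_iff]
      omega
    rcases this with rfl | rfl <;> assumption
  haveI : Nontrivial (Fin s) := Fin.nontrivial_iff_two_le.mpr hs
  -- each k i ≥ 2
  have hk2 : ∀ i, 2 ≤ k i := by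
    intro i
    obtain ⟨j, hj⟩ := exists_ne i
    have hij : i ≠ j := hj.symm
    obtain ⟨⟨hpi, hpj⟩, -⟩ := hmp i j hij
    obtain ⟨r, hr⟩ : ∃ r, mp i j ∉ ℓ r := by
      by_contra hcon
      push_neg at hcon
      exact hnc ⟨mp i j, hcon⟩
    have hir : i ≠ r := fun e => hr (e ▸ hpi)
    obtain ⟨⟨hqi, hqr⟩, -⟩ := hmp i r hir
    have hne : mp i j ≠ mp i r := fun e => hr (e ▸ hqr)
    have hsub : ({mp i j, mp i r} : Set P) ⊆ S ∩ ℓ i := by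
      intro x hx
      rcases hx with rfl | hx
      · exact ⟨two_mem_S hij hpi hpj, hpi⟩
      · simp only [Set.mem_singleton_iff] at hx; subst hx
        exact ⟨two_mem_S hir hqi hqr, hqi⟩
    rw [hk]
    calc 2 = ({mp i j, mp i r} : Set P).ncard := (Set.ncard_pair hne).symm
    _ ≤ (S ∩ ℓ i).ncard :=
        Set.ncard_le_ncard hsub (hSfin.inter_of_left _)
  -- lower bounds on the incidence count
  have hA : 2 * s ≤ ∑ i, k i := by
    calc 2 * s = ∑ _i : Fin s, 2 := by
          rw [Finset.sum_const, Finset.card_univ, Fintype.card_fin, smul_eq_mul, mul_comm]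
    _ ≤ ∑ i, k i := Finset.sum_le_sum fun i _ => hk2 i
  have hB : 2 * t ≤ ∑ i, k i := by
    rw [hswap]
    calc 2 * t = ∑ _p ∈ Sf, 2 := by
          rw [Finset.sum_const, smul_eq_mul, htc, mul_comm]
    _ ≤ _ := Finset.sum_le_sum deg2
  have hST : s + t ≤ ∑ i, k i := by omega
  have hsum : ∑ i, ((k i : ℤ) - 1) = ((∑ i, k i : ℕ) : ℤ) - (s : ℤ) := by
    push_cast
    rw [Finset.sum_sub_distrib]
    simp
  constructor
  · rw [hsum]
    have := hST
    omega
  constructor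
  · -- equality implies s = 3 ∧ t = 3
    intro heq
    rw [hsum] at heq
    have hN : ∑ i, k i = s + t := by omega
    have hts : t = s := by omega
    have hkall : ∀ i, k i = 2 := by
      intro i
      by_contra hne
      have h3 : 3 ≤ k i := by have := hk2 i; omega
      have : 2 * s < ∑ i, k i := by
        calc 2 * s = ∑ _i : Fin s, 2 := by
              rw [Finset.sum_const, Finset.card_univ, Fintype.card_fin, smul_eq_mul, mul_comm]
        _ < ∑ i, k i :=
              Finset.sum_lt_sum (fun j _ => hk2 j) ⟨i, Finset.mem_univ i, by omega⟩
      omega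
    have hdall : ∀ p ∈ Sf, (Finset.univ.filter (fun i => p ∈ ℓ i)).card = 2 := by
      intro p hp
      by_contra hne
      have h3 : 3 ≤ (Finset.univ.filter (fun i => p ∈ ℓ i)).card := by
        have := deg2 p hp; omega
      have : 2 * t < ∑ i, k i := by
        rw [hswap]
        calc 2 * t = ∑ _p ∈ Sf, 2 := by
              rw [Finset.sum_const, smul_eq_mul, htc, mul_comm]
        _ < _ := Finset.sum_lt_sum deg2 ⟨p, hp, by omega⟩
      omega
    -- the map j ↦ mp i0 j on j ≠ i0 is injective into S ∩ ℓ i0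
    set i0 : Fin s := ⟨0, by omega⟩ with hi0
    have himg : (Finset.univ.erase i0).image (fun j => mp i0 j)
        ⊆ Sf.filter (fun p => p ∈ ℓ i0) := by
      intro p hp
      obtain ⟨j, hj, rfl⟩ := Finset.mem_image.mp hp
      have hij : i0 ≠ j := (Finset.ne_of_mem_erase hj).symm
      obtain ⟨⟨h1, h2⟩, -⟩ := hmp i0 j hij
      exact Finset.mem_filter.mpr ⟨hSfin.mem_toFinset.mpr (two_mem_S hij h1 h2), h1⟩
    have hinjOn : Set.InjOn (fun j => mp i0 j) ↑(Finset.univ.erase i0) := by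
      intro a ha b hb hab
      simp only [Finset.coe_erase, Set.mem_diff] at ha hb
      have hia : i0 ≠ a := fun e => ha.2 (by simp [e.symm])
      have hib : i0 ≠ b := fun e => hb.2 (by simp [e.symm])
      obtain ⟨⟨ha1, ha2⟩, -⟩ := hmp i0 a hia
      obtain ⟨⟨hb1, hb2⟩, -⟩ := hmp i0 b hib
      simp only at hab
      have hpS : mp i0 a ∈ S := two_mem_S hia ha1 ha2
      have hd : (Finset.univ.filter (fun i => mp i0 a ∈ ℓ i)).card = 2 :=
        hdall _ (hSfin.mem_toFinset.mpr hpS)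
      have hsa : ({i0, a} : Finset (Fin s)) ⊆ Finset.univ.filter (fun i => mp i0 a ∈ ℓ i) := by
        intro x hx
        simp only [Finset.mem_insert, Finset.mem_singleton] at hx
        rcases hx with rfl | rfl
        · exact Finset.mem_filter.mpr ⟨Finset.mem_univ _, ha1⟩
        · exact Finset.mem_filter.mpr ⟨Finset.mem_univ _, ha2⟩
      have hsb : ({i0, b} : Finset (Fin s)) ⊆ Finset.univ.filter (fun i => mp i0 a ∈ ℓ i) := by
        intro x hx
        simp only [Finset.mem_insert, Finset.mem_singleton] at hx
        rcases hx with rfl | rfl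
        · exact Finset.mem_filter.mpr ⟨Finset.mem_univ _, ha1⟩
        · exact Finset.mem_filter.mpr ⟨Finset.mem_univ _, hab ▸ hb2⟩
      have hea : ({i0, a} : Finset (Fin s)) = Finset.univ.filter (fun i => mp i0 a ∈ ℓ i) :=
        Finset.eq_of_subset_of_card_le hsa (by rw [hd, Finset.card_pair hia])
      have heb : ({i0, b} : Finset (Fin s)) = Finset.univ.filter (fun i => mp i0 a ∈ ℓ i) :=
        Finset.eq_of_subset_of_card_le hsb (by rw [hd, Finset.card_pair hib])
      have : b ∈ ({i0, a} : Finset (Fin s)) := by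
        rw [hea, ← heb]; simp
      simp only [Finset.mem_insert, Finset.mem_singleton] at this
      rcases this with h | h
      · exact absurd h.symm hib
      · exact h.symm
    have hcard : s - 1 ≤ k i0 := by
      rw [kf]
      calc s - 1 = (Finset.univ.erase i0).card := by
            rw [Finset.card_erase_of_mem (Finset.mem_univ _), Finset.card_univ,
              Fintype.card_fin]
      _ = ((Finset.univ.erase i0).image (fun j => mp i0 j)).card :=
            (Finset.card_image_of_injOn hinjOn).symm
      _ ≤ (Sf.filter (fun p => p ∈ ℓ i0)).card := Finset.card_le_card himg
    have : k i0 = 2 := hkall i0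
    have hs3' : s = 3 := by omega
    exact ⟨hs3', by omega⟩
  · -- s = 3 ∧ t = 3 implies equality
    rintro ⟨hs3', ht3⟩
    -- upper bound: k i ≤ s - 1
    have hkub : ∀ i, k i ≤ s - 1 := by
      intro i
      rw [kf]
      have hsub : Sf.filter (fun p => p ∈ ℓ i)
          ⊆ (Finset.univ.erase i).image (fun j => mp i j) := by
        intro p hp
        obtain ⟨hpS, hpi⟩ := Finset.mem_filter.mp hp
        obtain ⟨a, b, hab, hpa, hpb⟩ := exS p (hSfin.mem_toFinset.mp hpS)
        have : ∃ j : Fin s, j ≠ i ∧ p ∈ ℓ j := by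
          by_cases hai : a = i
          · exact ⟨b, fun e => hab (hai.trans e.symm), hpb⟩
          · exact ⟨a, hai, hpa⟩
        obtain ⟨j, hji, hpj⟩ := this
        have hij : i ≠ j := hji.symm
        refine Finset.mem_image.mpr ⟨j, Finset.mem_erase.mpr ⟨hji, Finset.mem_univ _⟩, ?_⟩
        exact ((hmp i j hij).2 p hpi hpj).symm
      calc (Sf.filter (fun p => p ∈ ℓ i)).card
          ≤ ((Finset.univ.erase i).image (fun j => mp i j)).card := Finset.card_le_card hsub
      _ ≤ (Finset.univ.erase i).card := Finset.card_image_le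
      _ = s - 1 := by
            rw [Finset.card_erase_of_mem (Finset.mem_univ _), Finset.card_univ,
              Fintype.card_fin]
    have hub : ∑ i, k i ≤ s * (s - 1) := by
      calc ∑ i, k i ≤ ∑ _i : Fin s, (s - 1) := Finset.sum_le_sum fun i _ => hkub i
      _ = s * (s - 1) := by
            rw [Finset.sum_const, Finset.card_univ, Fintype.card_fin, smul_eq_mul]
    rw [hsum]
    have h6 : ∑ i, k i = 6 := by
      subst hs3' ht3
      omega
    omega
end

section
/- For $F = x_0(x_0x_2 + x_1^2)$, the multiplicative Legendre transform is $F_* = (4x_0x_2 + x_1^2)^2 / x_2$; equivalently, the logarithmic gradient maps $d\ln F$ and $d \ln F_*$ are inverse to each other: $d\ln F_* \circ d\ln F = \mathrm{id}$ on a dense open subset of $\mathbb{C}^3$. -/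
/-- for `F = x₀(x₀x₂ + x₁²)` with multiplicative Legendre
transform `F₊ = (4y₀y₂ + y₁²)²/y₂`, the logarithmic gradients are mutually
inverse: `d ln F₊ (d ln F (x)) = x` wherever defined (here on the dense open
set `x₀ ≠ 0`, `x₀x₂ + x₁² ≠ 0`). -/
theorem dlnFstar_comp_dlnF (x0 x1 x2 : ℂ) (h0 : x0 ≠ 0)
    (hD : x0 * x2 + x1 ^ 2 ≠ 0) :
    -- `u = d ln F (x)`
    (fun u0 u1 u2 : ℂ =>
        -- `d ln F₊ (u) = x`
        (8 * u2 / (4 * u0 * u2 + u1 ^ 2),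
         4 * u1 / (4 * u0 * u2 + u1 ^ 2),
         (4 * u0 * u2 - u1 ^ 2) / ((4 * u0 * u2 + u1 ^ 2) * u2)) = (x0, x1, x2))
      ((2 * x0 * x2 + x1 ^ 2) / (x0 * (x0 * x2 + x1 ^ 2)))
      (2 * x1 / (x0 * x2 + x1 ^ 2))
      (x0 / (x0 * x2 + x1 ^ 2)) := by
  have hkey : 4 * ((2 * x0 * x2 + x1 ^ 2) / (x0 * (x0 * x2 + x1 ^ 2))) *
      (x0 / (x0 * x2 + x1 ^ 2)) + (2 * x1 / (x0 * x2 + x1 ^ 2)) ^ 2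
      = 8 / (x0 * x2 + x1 ^ 2) := by
    field_simp; ring
  have hnum : 4 * ((2 * x0 * x2 + x1 ^ 2) / (x0 * (x0 * x2 + x1 ^ 2))) *
      (x0 / (x0 * x2 + x1 ^ 2)) - (2 * x1 / (x0 * x2 + x1 ^ 2)) ^ 2
      = 8 * x0 * x2 / (x0 * x2 + x1 ^ 2) ^ 2 := by
    field_simp; ring
  simp only [hkey, hnum, Prod.mk.injEq]
  refine ⟨?_, ?_, ?_⟩ <;> field_simp <;> ring
end

section
/- Let $F$ be a reduced (squarefree) homogeneous polynomial in three variables defining a curve $C = V(F) \subset \mathbb{P}^2$ of degree $d$, with irreducible components $C_1, \ldots, C_h$ of degrees $d_i$ and geometric genera $g_i$, and assume the polar map of $F$ is birational. If at each singular point $x$ the local base-locus multiplicity $\tilde\mu_x$ of the polar system satisfies $\tilde\mu_x \leq 2\delta_x - r_x + 1$ and $\sum_x \tilde\mu_x = d^2 - 2d$, then $\sum_{i=1}^h (2 - d_i) \geq 2\sum_{i=1}^h g_i + \sum_{x \in \mathrm{Sing}(C)} (r_x - 1) \geq 0$. -/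
/-! Doubling the genus formula expresses `2 ∑ δₓ` through `(d-1)(d-2)`, `∑ gᵢ` and `h`.
Summing the local bounds `μ̃ₓ ≤ 2δₓ - (rₓ - 1)` and inserting the homaloidal count
`∑ μ̃ₓ = d² - 2d`, the quadratic terms in `d` cancel and what is left is
`2h - d ≥ 2 ∑ gᵢ + ∑ (rₓ - 1)`, while `∑ (2 - dᵢ) = 2h - d` since `∑ dᵢ = d`. -/

open Finset

lemma Int.two_mul_sub_one_mul_sub_two_ediv_two (n : ℤ) :
    2 * ((n - 1) * (n - 2) / 2) = (n - 1) * (n - 2) := by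
  apply Int.two_mul_ediv_two_of_even
  simpa [sub_sub, one_add_one_eq_two] using Int.even_mul_pred_self (n - 1)

lemma Finset.sum_le_two_mul_sum_sub_sum_sub_one {X : Type*} {S : Finset X} {μ δ r : X → ℤ}
    (h : ∀ x ∈ S, μ x ≤ 2 * δ x - r x + 1) :
    ∑ x ∈ S, μ x ≤ 2 * ∑ x ∈ S, δ x - ∑ x ∈ S, (r x - 1) := by
  calc ∑ x ∈ S, μ x ≤ ∑ x ∈ S, (2 * δ x - (r x - 1)) :=
        sum_le_sum fun x hx => (h x hx).trans_eq (by ring)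
    _ = 2 * ∑ x ∈ S, δ x - ∑ x ∈ S, (r x - 1) := by rw [sum_sub_distrib, mul_sum]

lemma Finset.sum_sub_one_nonneg {X : Type*} {S : Finset X} {r : X → ℕ}
    (hr : ∀ x ∈ S, 1 ≤ r x) : 0 ≤ ∑ x ∈ S, ((r x : ℤ) - 1) :=
  sum_nonneg fun x hx => sub_nonneg.mpr (by exact_mod_cast hr x hx)

lemma sum_two_sub_eq {h d : ℕ} {dd : Fin h → ℕ} (hsum : ∑ i, dd i = d) :
    ∑ i, (2 - (dd i : ℤ)) = 2 * h - d := by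
  rw [sum_sub_distrib, ← Nat.cast_sum, hsum]
  simp [mul_comm]

lemma two_mul_sub_ge_of_genus_formula {d h G Δ R M : ℤ}
    (hgenus : (d - 1) * (d - 2) = 2 * (G + Δ - h + 1))
    (hmu : M ≤ 2 * Δ - R) (hM : M = d ^ 2 - 2 * d) :
    2 * h - d ≥ 2 * G + R := by
  nlinarith

theorem homaloidal_component_inequality_general {X : Type*} (d h : ℕ)
    (dd g : Fin h → ℕ) (hsum : ∑ i, dd i = d)
    (S : Finset X) (δ r μ : X → ℕ) (hr : ∀ x ∈ S, 1 ≤ r x)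
    -- genus formula (Lemma 4)
    (hgenus : ((d : ℤ) - 1) * ((d : ℤ) - 2) / 2 =
        ∑ i, (g i : ℤ) + ∑ x ∈ S, (δ x : ℤ) - h + 1)
    -- Jung–Milnor bound on the local multiplicities of the polar base scheme
    (hmu : ∀ x ∈ S, (μ x : ℤ) ≤ 2 * (δ x : ℤ) - (r x : ℤ) + 1)
    -- the polar map is birational, so the base scheme has total length `d² - 2d`
    (hsummu : ∑ x ∈ S, (μ x : ℤ) = (d : ℤ) ^ 2 - 2 * d) :
    (∑ i, (2 - (dd i : ℤ))) ≥ 2 * ∑ i, (g i : ℤ) + ∑ x ∈ S, ((r x : ℤ) - 1) ∧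
      2 * ∑ i, (g i : ℤ) + ∑ x ∈ S, ((r x : ℤ) - 1) ≥ 0 := by
  have hgenus₂ : ((d : ℤ) - 1) * ((d : ℤ) - 2) =
      2 * (∑ i, (g i : ℤ) + ∑ x ∈ S, (δ x : ℤ) - h + 1) := by
    rw [← hgenus, Int.two_mul_sub_one_mul_sub_two_ediv_two]
  have hg : 0 ≤ ∑ i, (g i : ℤ) := sum_nonneg fun i _ => Int.natCast_nonneg _
  refine ⟨?_, by linarith [sum_sub_one_nonneg hr]⟩
  rw [sum_two_sub_eq hsum]
  exact two_mul_sub_ge_of_genus_formula hgenus₂ (sum_le_two_mul_sum_sub_sum_sub_one hmu) hsummu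

/-- let `C` be a reduced plane curve of degree `d` with `h`
irreducible components of degrees `dᵢ` (so `∑ dᵢ = d`) and geometric genera
`gᵢ`, with singular points `S` carrying delta invariants `δₓ`, branch numbers
`rₓ ≥ 1` and local base-locus multiplicities `μ̃ₓ` of the polar system. Given
the genus formula `(d-1)(d-2)/2 = ∑ gᵢ + ∑ δₓ - h + 1`, the Jung–Milnor bound
`μ̃ₓ ≤ 2δₓ - rₓ + 1`, and the homaloidal degree count `∑ μ̃ₓ = d² - 2d`, we
get `∑ (2 - dᵢ) ≥ 2 ∑ gᵢ + ∑ (rₓ - 1) ≥ 0`. -/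
theorem homaloidal_component_inequality {X : Type*} (d h : ℕ)
    (dd g : Fin h → ℕ) (hdeg : ∀ i, 1 ≤ dd i) (hsum : ∑ i, dd i = d)
    (S : Finset X) (δ r μ : X → ℕ) (hr : ∀ x ∈ S, 1 ≤ r x)
    -- genus formula (Lemma 4)
    (hgenus : ((d : ℤ) - 1) * ((d : ℤ) - 2) / 2 =
        ∑ i, (g i : ℤ) + ∑ x ∈ S, (δ x : ℤ) - h + 1)
    -- Jung–Milnor bound on the local multiplicities of the polar base scheme
    (hmu : ∀ x ∈ S, (μ x : ℤ) ≤ 2 * (δ x : ℤ) - (r x : ℤ) + 1)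
    -- the polar map is birational, so the base scheme has total length `d² - 2d`
    (hsummu : ∑ x ∈ S, (μ x : ℤ) = (d : ℤ) ^ 2 - 2 * d) :
    (∑ i, (2 - (dd i : ℤ))) ≥ 2 * ∑ i, (g i : ℤ) + ∑ x ∈ S, ((r x : ℤ) - 1) ∧
      2 * ∑ i, (g i : ℤ) + ∑ x ∈ S, ((r x : ℤ) - 1) ≥ 0 :=
  homaloidal_component_inequality_general d h dd g hsum S δ r μ hr hgenus hmu hsummu
end

section
/- Let $s \geq 2$ lines in $\mathbb{P}^2$, not all concurrent, with $a_j$ denoting the number of points lying on exactly $j$ lines. If $a_s = 0$ (no point lies on all $s$ lines), then $s \leq \sum_{j=2}^{s} a_j (j-1)$, with equality if and only if $s = 3$ and $a_2 = 3$ (and $a_j = 0$ for $j \neq 2$). -/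
/-- for `s ≥ 2` distinct lines in the projective plane
(combinatorial model: two distinct lines meet in exactly one point), not all
concurrent (equivalently `a s = 0`), with `a j` the number of points lying on
exactly `j` lines: `s ≤ ∑_{j=2}^s a j (j-1)`, with equality iff `s = 3`,
`a 2 = 3` and `a j = 0` for `j ≠ 2`. -/
theorem lines_not_concurrent_count {P : Type*} (s : ℕ) (hs : 2 ≤ s)
    (ℓ : Fin s → Set P) (hinj : Function.Injective ℓ)
    (hmeet : ∀ i j : Fin s, i ≠ j → ∃! p : P, p ∈ ℓ i ∧ p ∈ ℓ j)
    (a : ℕ → ℕ)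
    (ha : ∀ n : ℕ, a n = Set.ncard {p : P | Set.ncard {i : Fin s | p ∈ ℓ i} = n})
    (hnc : ¬ ∃ p : P, ∀ i, p ∈ ℓ i) (has : a s = 0) :
    s ≤ ∑ j ∈ Finset.Icc 2 s, a j * (j - 1) ∧
      (s = ∑ j ∈ Finset.Icc 2 s, a j * (j - 1) ↔
        s = 3 ∧ a 2 = 3 ∧ ∀ j ∈ Finset.Icc 2 s, j ≠ 2 → a j = 0) := by
  classical
  -- multiplicity as a Finset
  set M : P → Finset (Fin s) := fun p => Finset.univ.filter (fun i => p ∈ ℓ i) with hM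
  have hMem : ∀ p i, i ∈ M p ↔ p ∈ ℓ i := by intro p i; simp [hM]
  have hcard : ∀ p, Set.ncard {i : Fin s | p ∈ ℓ i} = (M p).card := by
    intro p
    rw [show {i : Fin s | p ∈ ℓ i} = ↑(M p) by ext i; simp [hM], Set.ncard_coe_finset]
  -- two distinct indices
  have hi01 : (⟨0, by omega⟩ : Fin s) ≠ ⟨1, by omega⟩ := by simp [Fin.ext_iff]
  have hP : Nonempty P := ⟨(hmeet _ _ hi01).exists.choose⟩
  -- the intersection-point function
  set f : Fin s × Fin s → P := fun q =>
    if h : q.1 ≠ q.2 then (hmeet q.1 q.2 h).exists.choose else Classical.arbitrary P with hf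
  have hfmem : ∀ i j : Fin s, i ≠ j → f (i, j) ∈ ℓ i ∧ f (i, j) ∈ ℓ j := by
    intro i j h
    simpa [hf, h] using (hmeet i j h).exists.choose_spec
  have hfuniq : ∀ (i j : Fin s) (h : i ≠ j) (p : P), p ∈ ℓ i → p ∈ ℓ j → p = f (i, j) := by
    intro i j h p hpi hpj
    obtain ⟨q, hq, huniq⟩ := hmeet i j h
    rw [huniq p ⟨hpi, hpj⟩, huniq (f (i, j)) (hfmem i j h)]
  set Pairs : Finset (Fin s × Fin s) := Finset.univ.offDiag with hPairs
  have hPairsMem : ∀ q : Fin s × Fin s, q ∈ Pairs ↔ q.1 ≠ q.2 := by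
    intro q; simp [hPairs, Finset.mem_offDiag]
  have hPairsCard : Pairs.card = s * s - s := by
    simp [hPairs, Finset.offDiag_card]
  set Pts : Finset P := Pairs.image f with hPts
  -- fibers
  have hfiber : ∀ p : P, Pairs.filter (fun q => f q = p) = (M p).offDiag := by
    intro p
    ext q
    simp only [Finset.mem_filter, hPairsMem, Finset.mem_offDiag, hMem]
    constructor
    · rintro ⟨h, rfl⟩
      exact ⟨(hfmem q.1 q.2 h).1, (hfmem q.1 q.2 h).2, h⟩
    · rintro ⟨h1, h2, h⟩
      exact ⟨h, (hfuniq q.1 q.2 h p h1 h2).symm⟩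
  have hfibercard : ∀ p : P, (Pairs.filter (fun q => f q = p)).card
      = (M p).card * ((M p).card - 1) := by
    intro p
    rw [hfiber, Finset.offDiag_card, Nat.mul_sub_one, Nat.mul_comm]
  -- total count
  have hcount1 : s * s - s = ∑ p ∈ Pts, (M p).card * ((M p).card - 1) := by
    rw [← hPairsCard, Finset.card_eq_sum_card_fiberwise (fun q hq => Finset.mem_image_of_mem f hq)]
    exact Finset.sum_congr rfl fun p _ => hfibercard p
  -- each point in Pts has multiplicity in Icc 2 s
  have hmaps : ∀ p ∈ Pts, (M p).card ∈ Finset.Icc 2 s := by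
    intro p hp
    rw [Finset.mem_Icc]
    constructor
    · obtain ⟨q, hq, rfl⟩ := Finset.mem_image.mp hp
      have h := (hPairsMem q).mp hq
      have hsub : ({q.1, q.2} : Finset (Fin s)) ⊆ M (f q) := by
        intro i hi
        rcases Finset.mem_insert.mp hi with rfl | hi
        · exact (hMem _ _).mpr (hfmem q.1 q.2 h).1
        · rw [Finset.mem_singleton.mp hi, hMem]
          exact (hfmem q.1 q.2 h).2
      calc 2 = ({q.1, q.2} : Finset (Fin s)).card := (Finset.card_pair h).symm
        _ ≤ (M (f q)).card := Finset.card_le_card hsub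
    · calc (M p).card ≤ Fintype.card (Fin s) := Finset.card_le_univ _
        _ = s := Fintype.card_fin s
  -- points with multiplicity j ≥ 2 form exactly the corresponding fiber of Pts
  have hsetA : ∀ j, 2 ≤ j →
      {p : P | Set.ncard {i : Fin s | p ∈ ℓ i} = j} = ↑(Pts.filter (fun p => (M p).card = j)) := by
    intro j hj
    ext p
    simp only [Set.mem_setOf_eq, Finset.coe_filter, Set.mem_setOf_eq, Finset.mem_coe,
      Finset.mem_filter, hcard]
    constructor
    · intro h
      refine ⟨?_, h⟩
      have h2 : 1 < (M p).card := by omega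
      obtain ⟨i, hi, k, hk, hik⟩ := Finset.one_lt_card.mp h2
      have : p = f (i, k) := hfuniq i k hik p ((hMem p i).mp hi) ((hMem p k).mp hk)
      rw [this]
      exact Finset.mem_image_of_mem f ((hPairsMem (i, k)).mpr hik)
    · exact fun h => h.2
  have haeq : ∀ j ∈ Finset.Icc 2 s, a j = (Pts.filter (fun p => (M p).card = j)).card := by
    intro j hj
    rw [ha j, hsetA j (Finset.mem_Icc.mp hj).1, Set.ncard_coe_finset]
  -- the key identity
  have hkey : ∑ j ∈ Finset.Icc 2 s, a j * (j * (j - 1)) = s * s - s := by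
    rw [hcount1, ← Finset.sum_fiberwise_of_maps_to hmaps
      (fun p => (M p).card * ((M p).card - 1))]
    refine Finset.sum_congr rfl fun j hj => ?_
    rw [haeq j hj]
    rw [Finset.sum_congr rfl (fun p hp => by
      rw [(Finset.mem_filter.mp hp).2])]
    rw [Finset.sum_const, smul_eq_mul]
  -- termwise bound
  have htermle : ∀ j ∈ Finset.Icc 2 s, a j * (j * (j - 1)) ≤ a j * ((s - 1) * (j - 1)) := by
    intro j hj
    rcases Finset.mem_Icc.mp hj with ⟨h2, hjs⟩
    rcases eq_or_lt_of_le hjs with rfl | hlt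
    · simp [has]
    · have : j ≤ s - 1 := by omega
      exact Nat.mul_le_mul_left _ (Nat.mul_le_mul_right _ this)
  have hsumle : s * s - s ≤ (s - 1) * ∑ j ∈ Finset.Icc 2 s, a j * (j - 1) := by
    rw [← hkey, Finset.mul_sum]
    refine Finset.sum_le_sum fun j hj => ?_
    calc a j * (j * (j - 1)) ≤ a j * ((s - 1) * (j - 1)) := htermle j hj
      _ = (s - 1) * (a j * (j - 1)) := by ring
  have hss : s * s - s = (s - 1) * s := by
    rw [Nat.sub_mul, one_mul]
  have hineq : s ≤ ∑ j ∈ Finset.Icc 2 s, a j * (j - 1) := by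
    have h1 : (s - 1) * s ≤ (s - 1) * ∑ j ∈ Finset.Icc 2 s, a j * (j - 1) := by
      rw [← hss]; exact hsumle
    exact Nat.le_of_mul_le_mul_left h1 (by omega)
  refine ⟨hineq, ?_, ?_⟩
  · -- forward direction of the iff
    intro heq
    -- termwise equality
    have hsumeq : ∑ j ∈ Finset.Icc 2 s, a j * (j * (j - 1))
        = ∑ j ∈ Finset.Icc 2 s, a j * ((s - 1) * (j - 1)) := by
      have hR : ∑ j ∈ Finset.Icc 2 s, a j * ((s - 1) * (j - 1))
          = (s - 1) * ∑ j ∈ Finset.Icc 2 s, a j * (j - 1) := by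
        rw [Finset.mul_sum]; exact Finset.sum_congr rfl fun j _ => by ring
      rw [hkey, hR, ← heq, hss]
    have hterm : ∀ j ∈ Finset.Icc 2 s, a j * (j * (j - 1)) = a j * ((s - 1) * (j - 1)) :=
      (Finset.sum_eq_sum_iff_of_le htermle).mp hsumeq
    -- a j = 0 unless j = s - 1
    have hzero : ∀ j ∈ Finset.Icc 2 s, j ≠ s - 1 → a j = 0 := by
      intro j hj hjne
      by_contra hne
      rcases Finset.mem_Icc.mp hj with ⟨h2, hjs⟩
      have := hterm j hj
      have hj1 : j * (j - 1) = (s - 1) * (j - 1) := by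
        rcases Nat.eq_zero_or_pos (a j) with h0 | h0
        · exact absurd h0 hne
        · exact Nat.eq_of_mul_eq_mul_left h0 this
      have : j = s - 1 := by
        have h1 : 0 < j - 1 := by omega
        have := Nat.eq_of_mul_eq_mul_right h1 hj1
        omega
      exact hjne this
    -- s = 2 is impossible (2 = 0 from the identity)
    have hs2 : s ≠ 2 := by
      intro h2
      subst h2
      have : ∑ j ∈ Finset.Icc 2 2, a j * (j * (j - 1)) = 2 := by rw [hkey]
      simp [has] at this
    -- hence s ≥ 3 and s - 1 ∈ Icc 2 s
    have hs3 : 3 ≤ s := by omega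
    have hmem : s - 1 ∈ Finset.Icc 2 s := Finset.mem_Icc.mpr ⟨by omega, by omega⟩
    -- the sum reduces to the single term j = s - 1
    have hsum1 : ∑ j ∈ Finset.Icc 2 s, a j * (j - 1) = a (s - 1) * (s - 2) := by
      rw [Finset.sum_eq_single_of_mem (s - 1) hmem
        (fun j hj hjne => by rw [hzero j hj hjne]; ring)]
      congr 1
    have hval : a (s - 1) * (s - 2) = s := by rw [← hsum1, ← heq]
    -- rule out s ≥ 4 geometrically
    have hs4 : s < 4 := by
      by_contra h4
      push_neg at h4
      have ha2 : 2 ≤ a (s - 1) := by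
        by_contra h
        push_neg at h
        have h1 : a (s - 1) ≤ 1 := by omega
        have h2 : a (s - 1) * (s - 2) ≤ 1 * (s - 2) := Nat.mul_le_mul_right _ h1
        omega
      -- two distinct points of multiplicity s - 1
      have := haeq (s - 1) hmem
      have hcard2 : 1 < (Pts.filter (fun p => (M p).card = s - 1)).card := by omega
      obtain ⟨p, hp, q, hq, hpq⟩ := Finset.one_lt_card.mp hcard2
      have hpm : (M p).card = s - 1 := (Finset.mem_filter.mp hp).2
      have hqm : (M q).card = s - 1 := (Finset.mem_filter.mp hq).2
      -- they share at least two lines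
      have hunion : (M p ∪ M q).card ≤ s := by
        calc (M p ∪ M q).card ≤ Fintype.card (Fin s) := Finset.card_le_univ _
          _ = s := Fintype.card_fin s
      have hinter : 2 ≤ (M p ∩ M q).card := by
        have := Finset.card_union_add_card_inter (M p) (M q)
        omega
      obtain ⟨i, hi, k, hk, hik⟩ := Finset.one_lt_card.mp (by omega : 1 < (M p ∩ M q).card)
      have hpi := (hMem p i).mp (Finset.mem_inter.mp hi).1
      have hpk := (hMem p k).mp (Finset.mem_inter.mp hk).1
      have hqi := (hMem q i).mp (Finset.mem_inter.mp hi).2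
      have hqk := (hMem q k).mp (Finset.mem_inter.mp hk).2
      have : p = q := by
        rw [hfuniq i k hik p hpi hpk, hfuniq i k hik q hqi hqk]
      exact hpq this
    -- so s = 3
    have hs3' : s = 3 := by omega
    subst hs3'
    have ha2 : a 2 = 3 := by simpa using hval
    refine ⟨rfl, ha2, fun j hj hjne => ?_⟩
    have : j = 3 := by
      rcases Finset.mem_Icc.mp hj with ⟨h1, h2⟩
      omega
    rw [this]
    exact has
  · -- reverse direction
    rintro ⟨rfl, ha2, hz⟩
    have ha3 : a 3 = 0 := hz 3 (by decide) (by decide)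
    rw [show Finset.Icc 2 3 = {2, 3} by decide]
    rw [Finset.sum_insert (by decide), Finset.sum_singleton, ha2, ha3]
end

section
/- Let $\mathcal{A}$ be an arrangement of $N$ distinct planes in $\mathbb{P}^3$ with polar map degree $d_{\mathcal{A}} \neq 0$, and let $\mathcal{A}'$ be obtained by adding one more distinct plane. Then $d_{\mathcal{A}'} > d_{\mathcal{A}}$. -/
open Module

/-- Number of hyperplanes of the arrangement `H` containing the subspace `W`. -/
noncomputable def arrMult {n : ℕ} (H : Fin n → Submodule ℂ (Fin 4 → ℂ))
    (W : Submodule ℂ (Fin 4 → ℂ)) : ℕ :=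
  Set.ncard {i : Fin n | W ≤ H i}

/-- The set `𝒫`: points (1-dimensional subspaces) lying on at least three of
the planes, such that the planes through the point do not all share a common
line. -/
def arrPoints {n : ℕ} (H : Fin n → Submodule ℂ (Fin 4 → ℂ)) :
    Set (Submodule ℂ (Fin 4 → ℂ)) :=
  {p | finrank ℂ p = 1 ∧ 3 ≤ arrMult H p ∧
    ¬ ∃ l : Submodule ℂ (Fin 4 → ℂ), finrank ℂ l = 2 ∧
        ∀ i, p ≤ H i → l ≤ H i}

/-- The set `ℒ`: lines (2-dimensional subspaces) contained in at least two of
the planes. -/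
def arrLines {n : ℕ} (H : Fin n → Submodule ℂ (Fin 4 → ℂ)) :
    Set (Submodule ℂ (Fin 4 → ℂ)) :=
  {l | finrank ℂ l = 2 ∧ 2 ≤ arrMult H l}

/-- The degree `d_𝒜` of the polar map of an arrangement of `n` planes in `ℙ³`,
given by the combinatorial formula of Corollary 4:
`d_𝒜 = n - 1 - ∑_{p ∈ 𝒫} (k_p - 1) + ∑_{l ∈ ℒ} (a_l - 1)(k_l - 1)`,
where `a_l = #{p ∈ 𝒫 : p ∈ l}`. -/
noncomputable def arrDegree {n : ℕ} (H : Fin n → Submodule ℂ (Fin 4 → ℂ)) : ℤ :=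
  (n : ℤ) - 1 - (∑ᶠ p ∈ arrPoints H, ((arrMult H p : ℤ) - 1)) +
    ∑ᶠ l ∈ arrLines H,
      ((Set.ncard {p ∈ arrPoints H | p ≤ l} : ℤ) - 1) * ((arrMult H l : ℤ) - 1)

/-!
Write `𝒜⁺` for `𝒜` together with the new plane `P`, and `t_q` for the number of trace lines
`P ∩ H`, `H ∈ 𝒜`, through a point `q` of `P`; `k`, `a`, `𝒫`, `ℒ` refer to `𝒜` and `k⁺`, `a⁺`,
`𝒫⁺` to `𝒜⁺`. Every plane of `𝒜` meets `P` in exactly one trace line, so double counting over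
the trace lines turns the change of the formula into
`d_{𝒜⁺} - d_𝒜 = 1 - #traces + ∑_{q ∈ 𝒫 on P} (t_q - 1) + ∑_{l ∈ ℒ, l ⊄ P} (a⁺_l - a_l)(k_l - 1)`.
A point `q ∈ 𝒫⁺ \ 𝒫` lies on `P`, and the planes of `𝒜` through it share a line `m ⊄ P` with
`k_m ≥ t_q`; charging `q` to `m` bounds the last sum below by `∑_{q ∈ 𝒫⁺ \ 𝒫} (t_q - 1)`.
Finally the points of `𝒫⁺` on `P` are the multiple points of the trace lines, and lines of a
plane without a common point satisfy `#lines ≤ ∑ (t_q - 1)` over their multiple points. The trace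
lines have no common point because `d_𝒜 ≠ 0`: a concurrent arrangement of at least two planes
has `d_𝒜 = 0`.
-/

open Finset

section LinearAlgebra

variable {K V : Type*} [DivisionRing K] [AddCommGroup V] [Module K V] [FiniteDimensional K V]

/-- With `u = ⊤` this says that a subspace not contained in a hyperplane meets it in codimension
one; with `u` a plane it says that two distinct lines in a plane meet in a point. -/
theorem Submodule.finrank_inf_add_one_of_not_le {s t u : Submodule K V} (hsu : s ≤ u)
    (htu : t ≤ u) (hu : finrank K u = finrank K t + 1) (hst : ¬ s ≤ t) :
    finrank K ↥(s ⊓ t) + 1 = finrank K s := by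
  have hlt : t < s ⊔ t := lt_of_le_of_ne le_sup_right fun h => hst (h ▸ le_sup_left)
  have h₁ := Submodule.finrank_lt_finrank_of_lt hlt
  have h₂ := Submodule.finrank_mono (sup_le hsu htu)
  have := Submodule.finrank_sup_add_finrank_inf_eq s t
  omega

theorem Submodule.not_le_of_finrank_eq {s t : Submodule K V} (h : finrank K s = finrank K t)
    (hst : s ≠ t) : ¬ s ≤ t :=
  fun hle => hst (Submodule.eq_of_le_of_finrank_le hle h.ge)

theorem Submodule.finrank_sup_eq_two {p q : Submodule K V} (hp : finrank K p = 1)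
    (hq : finrank K q = 1) (hpq : p ≠ q) : finrank K ↥(p ⊔ q) = 2 := by
  have hlt : p ⊓ q < p :=
    inf_le_left.lt_of_ne fun h => Submodule.not_le_of_finrank_eq (hp.trans hq.symm) hpq
      (h ▸ inf_le_right)
  have := Submodule.finrank_lt_finrank_of_lt hlt
  have := Submodule.finrank_sup_add_finrank_inf_eq p q
  omega

theorem Submodule.exists_finrank_eq_one_le {W : Submodule K V} (hW : 0 < finrank K W) :
    ∃ p ≤ W, finrank K p = 1 := by
  obtain ⟨x, hx⟩ := Module.finrank_pos_iff_exists_ne_zero.1 hW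
  refine ⟨K ∙ (x : V), (Submodule.span_singleton_le_iff_mem _ W).2 x.2, ?_⟩
  exact finrank_span_singleton (by simpa using hx)

end LinearAlgebra

theorem Finset.sum_card_filter_mul {α β R : Type*} [CommSemiring R] (s : Finset α)
    (t : Finset β) (r : α → β → Prop) [∀ a b, Decidable (r a b)] (w : β → R) :
    ∑ b ∈ t, (#{a ∈ s | r a b} : R) * w b = ∑ a ∈ s, ∑ b ∈ t with r a b, w b := by
  simp_rw [← nsmul_eq_mul, ← sum_const]
  exact (sum_sum_bipartiteAbove_eq_sum_sum_bipartiteBelow r fun _ b => w b).symm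

theorem finsum_mem_eq_sum_filter_of_subset {α M : Type*} [AddCommMonoid M] {S : Set α}
    {U : Finset α} [DecidablePred (· ∈ S)] (hSU : S ⊆ U) (f : α → M) :
    ∑ᶠ x ∈ S, f x = ∑ x ∈ U with x ∈ S, f x := by
  rw [← finsum_mem_coe_finset, coe_filter]
  exact finsum_mem_congr (Set.ext fun x => ⟨fun hx => ⟨hSU hx, hx⟩, And.right⟩) fun _ _ => rfl

open scoped Classical

section LineArrangement

variable {K V : Type*} [DivisionRing K] [AddCommGroup V] [Module K V] [FiniteDimensional K V]
  {P : Submodule K V} {T S : Finset (Submodule K V)}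
  (hP : finrank K P = 3) (hT : ∀ l ∈ T, finrank K l = 2 ∧ l ≤ P)
  (hS : ∀ q, q ∈ S ↔ finrank K q = 1 ∧ 2 ≤ #{l ∈ T | q ≤ l})
include hP hT hS

theorem inf_mem_of_ne {l₁ l₂ : Submodule K V} (h₁ : l₁ ∈ T) (h₂ : l₂ ∈ T) (hne : l₁ ≠ l₂) :
    l₁ ⊓ l₂ ∈ S := by
  have h := Submodule.finrank_inf_add_one_of_not_le (hT l₁ h₁).2 (hT l₂ h₂).2
    (by rw [hP, (hT l₂ h₂).1])
    (Submodule.not_le_of_finrank_eq ((hT l₁ h₁).1.trans (hT l₂ h₂).1.symm) hne)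
  rw [(hT l₁ h₁).1] at h
  refine (hS _).2 ⟨by omega, ?_⟩
  calc 2 = #{l₁, l₂} := (card_pair hne).symm
    _ ≤ _ := card_le_card (insert_subset_iff.2 ⟨mem_filter.2 ⟨h₁, inf_le_left⟩,
      singleton_subset_iff.2 (mem_filter.2 ⟨h₂, inf_le_right⟩)⟩)

theorem exists_not_le_of_not_concurrent
    (hnc : ¬ ∃ q : Submodule K V, finrank K q = 1 ∧ ∀ l ∈ T, q ≤ l) :
    ∃ l₀ ∈ T, ∃ p₀ ∈ S, ¬ p₀ ≤ l₀ := by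
  by_contra! h
  refine hnc ?_
  rcases T.eq_empty_or_nonempty with rfl | ⟨l₀, hl₀⟩
  · obtain ⟨q, -, hq⟩ := Submodule.exists_finrank_eq_one_le (W := P) (by omega)
    exact ⟨q, hq, by simp⟩
  by_cases hT₁ : ∃ l₁ ∈ T, l₁ ≠ l₀
  · obtain ⟨l₁, hl₁, hne⟩ := hT₁
    have hq := inf_mem_of_ne hP hT hS hl₁ hl₀ hne
    exact ⟨_, ((hS _).1 hq).1, fun l hl => h l hl _ hq⟩
  · push Not at hT₁
    obtain ⟨q, hq, hq₁⟩ :=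
      Submodule.exists_finrank_eq_one_le (W := l₀) (by rw [(hT l₀ hl₀).1]; omega)
    exact ⟨q, hq₁, fun l hl => hT₁ l hl ▸ hq⟩

theorem card_add_card_le_sum_of_not_concurrent
    (hnc : ¬ ∃ q : Submodule K V, finrank K q = 1 ∧ ∀ l ∈ T, q ≤ l) :
    #T + #S ≤ ∑ q ∈ S, #{l ∈ T | q ≤ l} := by
  obtain ⟨l₀, hl₀, p₀, hp₀, hp₀l₀⟩ := exists_not_le_of_not_concurrent hP hT hS hnc
  -- Sort the lines `l ≠ l₀` by their meet with `l₀`; the point `p₀ ∉ l₀` gives the extra `1`.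
  set c : Submodule K V → ℕ := fun q => #{l ∈ T.erase l₀ | q ≤ l₀ ∧ q ≤ l}
  have hcount : #(T.erase l₀) ≤ ∑ q ∈ S, c q :=
    calc #(T.erase l₀) ≤ ∑ l ∈ T.erase l₀, #{q ∈ S | q ≤ l₀ ∧ q ≤ l} := by
          rw [card_eq_sum_ones]
          refine sum_le_sum fun l hl =>
            card_pos.2 ⟨l ⊓ l₀, mem_filter.2 ⟨?_, inf_le_right, inf_le_left⟩⟩
          exact inf_mem_of_ne hP hT hS (mem_of_mem_erase hl) hl₀ (ne_of_mem_erase hl)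
      _ = ∑ q ∈ S, c q :=
          (sum_card_bipartiteAbove_eq_sum_card_bipartiteBelow fun q l => q ≤ l₀ ∧ q ≤ l).symm
  have hle : ∀ q ∈ S, c q + 1 ≤ #{l ∈ T | q ≤ l} := by
    intro q hq
    by_cases hq₀ : q ≤ l₀
    · have : {l ∈ T.erase l₀ | q ≤ l₀ ∧ q ≤ l} = {l ∈ T | q ≤ l}.erase l₀ := by
        ext l
        simp [hq₀, and_assoc]
      simp only [c, this, card_erase_add_one (mem_filter.2 ⟨hl₀, hq₀⟩), le_refl]
    · have : c q = 0 := by simp [c, hq₀]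
      have := ((hS q).1 hq).2
      omega
  have hlt : c p₀ + 1 < #{l ∈ T | p₀ ≤ l} := by
    have : c p₀ = 0 := by simp [c, hp₀l₀]
    have := ((hS p₀).1 hp₀).2
    omega
  have hsum := sum_lt_sum hle ⟨p₀, hp₀, hlt⟩
  rw [sum_add_distrib, sum_const, smul_eq_mul, mul_one] at hsum
  have := card_erase_add_one hl₀
  omega

end LineArrangement

section Arrangement

variable {n : ℕ} {A : Fin n → Submodule ℂ (Fin 4 → ℂ)} {W : Submodule ℂ (Fin 4 → ℂ)}

theorem arrMult_eq_card (A : Fin n → Submodule ℂ (Fin 4 → ℂ)) (W : Submodule ℂ (Fin 4 → ℂ)) :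
    arrMult A W = #{i | W ≤ A i} := by
  rw [arrMult, ← Set.ncard_coe_finset, coe_filter]
  simp

theorem arrMult_le (A : Fin n → Submodule ℂ (Fin 4 → ℂ)) (W : Submodule ℂ (Fin 4 → ℂ)) :
    arrMult A W ≤ n := by
  simpa [arrMult_eq_card] using card_filter_le (univ : Finset (Fin n)) fun i => W ≤ A i

theorem arrMult_bot : arrMult A ⊥ = n := by
  simp [arrMult_eq_card]

theorem arrMult_pos_iff : 0 < arrMult A W ↔ ∃ i, W ≤ A i := by
  simp [arrMult_eq_card, card_pos, Finset.Nonempty]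

theorem one_lt_arrMult_iff : 1 < arrMult A W ↔ ∃ i j, i ≠ j ∧ W ≤ A i ∧ W ≤ A j := by
  rw [arrMult, Set.one_lt_ncard_iff]
  exact ⟨fun ⟨i, j, hi, hj, h⟩ => ⟨i, j, h, hi, hj⟩, fun ⟨i, j, h, hi, hj⟩ => ⟨i, j, hi, hj, h⟩⟩

theorem arrDegree_of_le_one (hn : n ≤ 1) : arrDegree A = n - 1 := by
  have hP : arrPoints A = ∅ :=
    Set.eq_empty_of_forall_notMem fun p hp => by have := arrMult_le A p; grind [arrPoints]
  have hL : arrLines A = ∅ :=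
    Set.eq_empty_of_forall_notMem fun l hl => by have := arrMult_le A l; grind [arrLines]
  simp [arrDegree, hP, hL]

end Arrangement

section Planes

variable {n : ℕ} {A : Fin n → Submodule ℂ (Fin 4 → ℂ)} {s t l m q : Submodule ℂ (Fin 4 → ℂ)}

theorem finrank_inf_eq_two (hs : finrank ℂ s = 3) (ht : finrank ℂ t = 3) (hst : s ≠ t) :
    finrank ℂ ↥(s ⊓ t) = 2 := by
  have := Submodule.finrank_inf_add_one_of_not_le le_top le_top (by simp [ht])
    (Submodule.not_le_of_finrank_eq (hs.trans ht.symm) hst)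
  omega

theorem finrank_inf_eq_one (hm : finrank ℂ m = 2) (ht : finrank ℂ t = 3) (h : ¬ m ≤ t) :
    finrank ℂ ↥(m ⊓ t) = 1 := by
  have := Submodule.finrank_inf_add_one_of_not_le le_top le_top (by simp [ht]) h
  omega

theorem eq_inf_of_le_of_le (hA : ∀ i, finrank ℂ (A i) = 3) (hAinj : Function.Injective A)
    (hl : finrank ℂ l = 2) {i j : Fin n} (hij : i ≠ j) (hi : l ≤ A i) (hj : l ≤ A j) :
    l = A i ⊓ A j :=
  Submodule.eq_of_le_of_finrank_le (le_inf hi hj)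
    (by rw [finrank_inf_eq_two (hA i) (hA j) (hAinj.ne hij), hl])

theorem arrLines_finite (hA : ∀ i, finrank ℂ (A i) = 3) (hAinj : Function.Injective A) :
    (arrLines A).Finite :=
  (Set.finite_range fun ij : Fin n × Fin n => A ij.1 ⊓ A ij.2).subset fun _ ⟨hl, h2⟩ => by
    obtain ⟨i, j, hij, hi, hj⟩ := one_lt_arrMult_iff.1 h2
    exact ⟨(i, j), (eq_inf_of_le_of_le hA hAinj hl hij hi hj).symm⟩

theorem arrPoints_finite (hA : ∀ i, finrank ℂ (A i) = 3) (hAinj : Function.Injective A) :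
    (arrPoints A).Finite := by
  refine (Set.finite_range fun ijk : Fin n × Fin n × Fin n =>
    A ijk.1 ⊓ A ijk.2.1 ⊓ A ijk.2.2).subset ?_
  rintro p ⟨hp, h3, hnl⟩
  obtain ⟨i, j, hij, hi, hj⟩ := one_lt_arrMult_iff.1 (by omega : 1 < arrMult A p)
  have hl := finrank_inf_eq_two (hA i) (hA j) (hAinj.ne hij)
  obtain ⟨k, hk, hlk⟩ : ∃ k, p ≤ A k ∧ ¬ A i ⊓ A j ≤ A k := by
    by_contra! h
    exact hnl ⟨_, hl, h⟩
  refine ⟨(i, j, k), (Submodule.eq_of_le_of_finrank_le (le_inf (le_inf hi hj) hk) ?_).symm⟩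
  rw [finrank_inf_eq_one hl (hA k) hlk, hp]

theorem exists_common_line_of_notMem_arrPoints (hA : ∀ i, finrank ℂ (A i) = 3)
    (hAinj : Function.Injective A) (hq : finrank ℂ q = 1) (h2 : 1 < arrMult A q)
    (hq𝒫 : q ∉ arrPoints A) :
    ∃ m : Submodule ℂ (Fin 4 → ℂ), finrank ℂ m = 2 ∧ ∀ i, q ≤ A i → m ≤ A i := by
  by_cases h3 : 3 ≤ arrMult A q
  · by_contra h
    exact hq𝒫 ⟨hq, h3, h⟩
  obtain ⟨i, j, hij, hi, hj⟩ := one_lt_arrMult_iff.1 h2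
  refine ⟨A i ⊓ A j, finrank_inf_eq_two (hA i) (hA j) (hAinj.ne hij), fun k hk => ?_⟩
  obtain rfl | rfl : k = i ∨ k = j := by
    by_contra! hk'
    have h := card_le_card (s := {i, j, k}) (t := {l | q ≤ A l}) (by simp [insert_subset_iff, *])
    rw [card_insert_of_notMem (by simp [hij, hk'.1.symm]), card_pair hk'.2.symm,
      ← arrMult_eq_card] at h
    omega
  exacts [inf_le_left, inf_le_right]

end Planes

section Degree

variable {n : ℕ} {A : Fin n → Submodule ℂ (Fin 4 → ℂ)} {p m : Submodule ℂ (Fin 4 → ℂ)}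

/-- The number `a_l` of points of `𝒫` on `l`. -/
noncomputable def arrPointCount (A : Fin n → Submodule ℂ (Fin 4 → ℂ))
    (l : Submodule ℂ (Fin 4 → ℂ)) : ℕ :=
  Set.ncard {p ∈ arrPoints A | p ≤ l}

theorem arrPointCount_eq_card {U : Finset (Submodule ℂ (Fin 4 → ℂ))} (hU : arrPoints A ⊆ U)
    (l : Submodule ℂ (Fin 4 → ℂ)) :
    arrPointCount A l = #{p ∈ U | p ∈ arrPoints A ∧ p ≤ l} := by
  rw [arrPointCount, ← Set.ncard_coe_finset, coe_filter]
  exact congrArg Set.ncard (Set.ext fun p => ⟨fun h => ⟨hU h.1, h⟩, And.right⟩)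

theorem arrDegree_eq_finsum :
    arrDegree A = n - 1 - ∑ᶠ p ∈ arrPoints A, ((arrMult A p : ℤ) - 1)
      + ∑ᶠ l ∈ arrLines A, ((arrPointCount A l : ℤ) - 1) * ((arrMult A l : ℤ) - 1) :=
  rfl

theorem arrDegree_eq_sum {U : Finset (Submodule ℂ (Fin 4 → ℂ))} (hUP : arrPoints A ⊆ U)
    (hUL : arrLines A ⊆ U) :
    arrDegree A = n - 1 - ∑ p ∈ U with p ∈ arrPoints A, ((arrMult A p : ℤ) - 1)
      + ∑ l ∈ U with l ∈ arrLines A,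
          ((arrPointCount A l : ℤ) - 1) * ((arrMult A l : ℤ) - 1) := by
  rw [arrDegree_eq_finsum, finsum_mem_eq_sum_filter_of_subset hUP,
    finsum_mem_eq_sum_filter_of_subset hUL]

theorem arrMult_eq_of_forall_le (h : ∀ i, p ≤ A i) : arrMult A p = n := by
  simp [arrMult_eq_card, h]

theorem arrDegree_eq_zero_of_common_line (hA : ∀ i, finrank ℂ (A i) = 3)
    (hAinj : Function.Injective A) (hn : 2 ≤ n) (hm : finrank ℂ m = 2) (h : ∀ i, m ≤ A i) :
    arrDegree A = 0 := by
  have hP : arrPoints A = ∅ :=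
    Set.eq_empty_of_forall_notMem fun p hp => hp.2.2 ⟨m, hm, fun i _ => h i⟩
  have hL : arrLines A = {m} := by
    refine Set.eq_singleton_iff_unique_mem.2 ⟨⟨hm, by rw [arrMult_eq_of_forall_le h]; omega⟩, ?_⟩
    rintro l ⟨hl, h2⟩
    obtain ⟨i, j, hij, hi, hj⟩ := one_lt_arrMult_iff.1 h2
    rw [eq_inf_of_le_of_le hA hAinj hl hij hi hj, eq_inf_of_le_of_le hA hAinj hm hij (h i) (h j)]
  simp [arrDegree, hP, hL, arrMult_eq_of_forall_le h]

theorem arrDegree_eq_zero_of_common_point (hA : ∀ i, finrank ℂ (A i) = 3)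
    (hAinj : Function.Injective A) (hp : p ∈ arrPoints A) (h : ∀ i, p ≤ A i) :
    arrDegree A = 0 := by
  have hP : arrPoints A = {p} := by
    refine Set.eq_singleton_iff_unique_mem.2 ⟨hp, fun q hq => ?_⟩
    by_contra hqp
    exact hq.2.2 ⟨q ⊔ p, Submodule.finrank_sup_eq_two hq.1 hp.1 hqp, fun i hi => sup_le hi (h i)⟩
  have ha : ∀ l ∈ arrLines A, arrPointCount A l = 1 := by
    rintro l ⟨hl, h2⟩
    obtain ⟨i, j, hij, hi, hj⟩ := one_lt_arrMult_iff.1 h2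
    have hpl : p ≤ l := (eq_inf_of_le_of_le hA hAinj hl hij hi hj) ▸ le_inf (h i) (h j)
    rw [arrPointCount, hP, Set.ncard_eq_one]
    exact ⟨p, Set.ext fun q => ⟨And.left, fun hq => ⟨hq, (Set.mem_singleton_iff.1 hq) ▸ hpl⟩⟩⟩
  have hL : ∑ᶠ l ∈ arrLines A, ((arrPointCount A l : ℤ) - 1) * ((arrMult A l : ℤ) - 1) = 0 :=
    finsum_mem_eq_zero_of_forall_eq_zero fun l hl => by simp [ha l hl]
  rw [arrDegree_eq_finsum, hL, hP, finsum_mem_singleton, arrMult_eq_of_forall_le h]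
  ring

theorem arrDegree_eq_zero_of_concurrent (hA : ∀ i, finrank ℂ (A i) = 3)
    (hAinj : Function.Injective A) (hn : 2 ≤ n) (hp : finrank ℂ p = 1) (h : ∀ i, p ≤ A i) :
    arrDegree A = 0 := by
  by_cases hp𝒫 : p ∈ arrPoints A
  · exact arrDegree_eq_zero_of_common_point hA hAinj hp𝒫 h
  obtain ⟨m, hm, hmA⟩ := exists_common_line_of_notMem_arrPoints hA hAinj hp
    (by rw [arrMult_eq_of_forall_le h]; omega) hp𝒫
  exact arrDegree_eq_zero_of_common_line hA hAinj hn hm fun i => hmA i (h i)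

end Degree

section AddPlane

variable {n : ℕ} {A : Fin n → Submodule ℂ (Fin 4 → ℂ)} {P W l p q : Submodule ℂ (Fin 4 → ℂ)}

theorem arrMult_snoc (A : Fin n → Submodule ℂ (Fin 4 → ℂ)) (P W : Submodule ℂ (Fin 4 → ℂ)) :
    arrMult (Fin.snoc A P) W = arrMult A W + if W ≤ P then 1 else 0 := by
  simp only [arrMult_eq_card, card_filter, Fin.sum_univ_castSucc, Fin.snoc_castSucc,
    Fin.snoc_last]

theorem mem_arrPoints_snoc_iff_of_not_le (hp : ¬ p ≤ P) :
    p ∈ arrPoints (Fin.snoc A P) ↔ p ∈ arrPoints A := by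
  simp [arrPoints, arrMult_snoc, hp, Fin.forall_fin_succ']

theorem arrPoints_subset_snoc : arrPoints A ⊆ arrPoints (Fin.snoc A P) := by
  rintro p ⟨hp, h3, hnl⟩
  refine ⟨hp, by rw [arrMult_snoc]; omega, fun ⟨l, hl, hlA⟩ => hnl ⟨l, hl, fun i hi => ?_⟩⟩
  simpa using hlA i.castSucc (by simpa using hi)

theorem mem_arrLines_snoc_iff_of_not_le (hl : ¬ l ≤ P) :
    l ∈ arrLines (Fin.snoc A P) ↔ l ∈ arrLines A := by
  simp [arrLines, arrMult_snoc, hl]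

theorem arrLines_subset_snoc : arrLines A ⊆ arrLines (Fin.snoc A P) :=
  fun _ ⟨hl, h2⟩ => ⟨hl, by rw [arrMult_snoc]; omega⟩

noncomputable def traceLines (A : Fin n → Submodule ℂ (Fin 4 → ℂ))
    (P : Submodule ℂ (Fin 4 → ℂ)) : Finset (Submodule ℂ (Fin 4 → ℂ)) :=
  univ.image fun i => P ⊓ A i

noncomputable def traceMult (A : Fin n → Submodule ℂ (Fin 4 → ℂ))
    (P q : Submodule ℂ (Fin 4 → ℂ)) : ℕ :=
  #{l ∈ traceLines A P | q ≤ l}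

theorem inf_mem_traceLines (i : Fin n) : P ⊓ A i ∈ traceLines A P :=
  mem_image_of_mem _ (mem_univ i)

theorem le_of_mem_traceLines (hl : l ∈ traceLines A P) : l ≤ P := by
  obtain ⟨i, -, rfl⟩ := mem_image.1 hl
  exact inf_le_left

section Trace

variable (hA : ∀ i, finrank ℂ (A i) = 3) (hP : finrank ℂ P = 3) (hPA : P ∉ Set.range A)
include hA hP hPA

theorem finrank_inf_eq_two_of_notMem_range (i : Fin n) : finrank ℂ ↥(P ⊓ A i) = 2 :=
  finrank_inf_eq_two hP (hA i) fun h => hPA ⟨i, h.symm⟩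

theorem finrank_of_mem_traceLines (hl : l ∈ traceLines A P) : finrank ℂ l = 2 := by
  obtain ⟨i, -, rfl⟩ := mem_image.1 hl
  exact finrank_inf_eq_two_of_notMem_range hA hP hPA i

theorem eq_inf_of_mem_traceLines (hl : l ∈ traceLines A P) {i : Fin n} (hi : l ≤ A i) :
    l = P ⊓ A i :=
  Submodule.eq_of_le_of_finrank_le (le_inf (le_of_mem_traceLines hl) hi) (by
    rw [finrank_inf_eq_two_of_notMem_range hA hP hPA, finrank_of_mem_traceLines hA hP hPA hl])

theorem mem_traceLines_iff :
    l ∈ traceLines A P ↔ finrank ℂ l = 2 ∧ l ≤ P ∧ 0 < arrMult A l := by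
  refine ⟨fun hl => ⟨finrank_of_mem_traceLines hA hP hPA hl, le_of_mem_traceLines hl, ?_⟩,
    fun ⟨hl, hlP, hk⟩ => ?_⟩
  · obtain ⟨i, -, rfl⟩ := mem_image.1 hl
    exact arrMult_pos_iff.2 ⟨i, inf_le_right⟩
  · obtain ⟨i, hi⟩ := arrMult_pos_iff.1 hk
    rw [Submodule.eq_of_le_of_finrank_le (le_inf hlP hi)
      (by rw [finrank_inf_eq_two_of_notMem_range hA hP hPA, hl])]
    exact inf_mem_traceLines i

theorem mem_arrLines_snoc_iff_of_le (hl : l ≤ P) :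
    l ∈ arrLines (Fin.snoc A P) ↔ l ∈ traceLines A P := by
  rw [mem_traceLines_iff hA hP hPA]
  have h := arrMult_snoc A P l
  rw [if_pos hl] at h
  exact ⟨fun ⟨hl2, h2⟩ => ⟨hl2, hl, by omega⟩, fun ⟨hl2, _, h1⟩ => ⟨hl2, by omega⟩⟩

theorem mem_arrLines_iff_of_le (hl : l ≤ P) :
    l ∈ arrLines A ↔ l ∈ traceLines A P ∧ 2 ≤ arrMult A l := by
  rw [mem_traceLines_iff hA hP hPA]
  exact ⟨fun ⟨hl2, h2⟩ => ⟨⟨hl2, hl, by omega⟩, h2⟩, fun ⟨⟨hl2, _, _⟩, h2⟩ => ⟨hl2, h2⟩⟩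

theorem coe_traceLines_subset_arrLines_snoc : (traceLines A P : Set _) ⊆ arrLines (Fin.snoc A P) :=
  fun _ hl => (mem_arrLines_snoc_iff_of_le hA hP hPA (le_of_mem_traceLines hl)).2 hl

theorem arrMult_eq_sum_traceLines (hW : W ≤ P) :
    arrMult A W = ∑ l ∈ traceLines A P with W ≤ l, arrMult A l := by
  rw [arrMult_eq_card, card_eq_sum_card_fiberwise (f := fun i => P ⊓ A i)
    fun i hi => mem_filter.2 ⟨inf_mem_traceLines i, le_inf hW (mem_filter.1 hi).2⟩]
  refine sum_congr rfl fun l hl => ?_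
  obtain ⟨hlT, hWl⟩ := mem_filter.1 hl
  rw [arrMult_eq_card, filter_filter]
  refine congrArg card (filter_congr fun i _ => ⟨fun ⟨_, h⟩ => h ▸ inf_le_right, fun hi => ?_⟩)
  exact ⟨hWl.trans hi, (eq_inf_of_mem_traceLines hA hP hPA hlT hi).symm⟩

theorem sum_traceLines_arrMult : ∑ l ∈ traceLines A P, arrMult A l = n := by
  have h := arrMult_eq_sum_traceLines hA hP hPA (bot_le : ⊥ ≤ P)
  rw [arrMult_bot] at h
  simpa using h.symm

theorem traceMult_le_arrMult (hq : q ≤ P) : traceMult A P q ≤ arrMult A q := by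
  rw [arrMult_eq_sum_traceLines hA hP hPA hq, traceMult, card_eq_sum_ones]
  exact sum_le_sum fun l hl =>
    ((mem_traceLines_iff hA hP hPA).1 (mem_filter.1 hl).1).2.2

theorem mem_arrPoints_snoc_iff_of_le (hq : finrank ℂ q = 1) (hqP : q ≤ P) :
    q ∈ arrPoints (Fin.snoc A P) ↔ 2 ≤ traceMult A P q := by
  have hk := arrMult_snoc A P q
  rw [if_pos hqP] at hk
  have htrace : ∀ {i}, q ≤ A i → P ⊓ A i ∈ {l ∈ traceLines A P | q ≤ l} := fun hi =>
    mem_filter.2 ⟨inf_mem_traceLines _, le_inf hqP hi⟩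
  constructor
  · rintro ⟨-, h3, hnl⟩
    by_contra! ht
    obtain ⟨i, hi⟩ := arrMult_pos_iff.1 (by omega : 0 < arrMult A q)
    refine hnl ⟨P ⊓ A i, finrank_inf_eq_two_of_notMem_range hA hP hPA i,
      Fin.lastCases (fun _ => by simp) fun j hj => ?_⟩
    rw [Fin.snoc_castSucc] at hj ⊢
    rw [card_le_one.1 (by unfold traceMult at ht; omega) _ (htrace hi) _ (htrace hj)]
    exact inf_le_right
  · intro ht
    obtain ⟨l₁, h₁, l₂, h₂, hne⟩ := one_lt_card.1 ht
    obtain ⟨⟨i, -, rfl⟩, hqi⟩ := (mem_filter.1 h₁).imp_left mem_image.1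
    obtain ⟨⟨j, -, rfl⟩, hqj⟩ := (mem_filter.1 h₂).imp_left mem_image.1
    have hij : i ≠ j := by rintro rfl; exact hne rfl
    refine ⟨hq, ?_, fun ⟨m, hm, hmA⟩ => hne ?_⟩
    · have := one_lt_arrMult_iff.2 ⟨i, j, hij, hqi.trans inf_le_right, hqj.trans inf_le_right⟩
      omega
    have hmP : m ≤ P := by simpa using hmA (Fin.last n) (by simpa)
    have hm_eq : ∀ k, q ≤ P ⊓ A k → m = P ⊓ A k := fun k hk =>
      Submodule.eq_of_le_of_finrank_le
        (le_inf hmP (by simpa using hmA k.castSucc (by simpa using hk.trans inf_le_right)))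
        (by rw [finrank_inf_eq_two_of_notMem_range hA hP hPA, hm])
    rw [← hm_eq i hqi, ← hm_eq j hqj]

theorem exists_arrLines_of_mem_arrPoints_snoc (hAinj : Function.Injective A)
    (hq : q ∈ arrPoints (Fin.snoc A P)) (hq' : q ∉ arrPoints A) :
    ∃ m ∈ arrLines A, ¬ m ≤ P ∧ q ≤ m ∧ traceMult A P q ≤ arrMult A m := by
  have hqP : q ≤ P := by_contra fun h => hq' ((mem_arrPoints_snoc_iff_of_not_le h).1 hq)
  have ht := (mem_arrPoints_snoc_iff_of_le hA hP hPA hq.1 hqP).1 hq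
  have htk := traceMult_le_arrMult hA hP hPA hqP
  obtain ⟨m, hm, hmA⟩ := exists_common_line_of_notMem_arrPoints hA hAinj hq.1 (by omega) hq'
  obtain ⟨i, j, hij, hi, hj⟩ := one_lt_arrMult_iff.1 (by omega : 1 < arrMult A q)
  have hqm : q ≤ m := (eq_inf_of_le_of_le hA hAinj hm hij (hmA i hi) (hmA j hj)) ▸ le_inf hi hj
  have hkm : arrMult A q ≤ arrMult A m := Set.ncard_le_ncard fun k hk => hmA k hk
  refine ⟨m, ⟨hm, by omega⟩, fun hmP => ?_, hqm, by omega⟩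
  -- otherwise `m` would be the only line of `traceLines A P` through `q`
  have hm_eq : ∀ l ∈ {l ∈ traceLines A P | q ≤ l}, l = m := by
    intro l hl
    obtain ⟨⟨k, -, rfl⟩, hql⟩ := (mem_filter.1 hl).imp_left mem_image.1
    exact (Submodule.eq_of_le_of_finrank_le (le_inf hmP (hmA k (hql.trans inf_le_right)))
      (by rw [finrank_inf_eq_two_of_notMem_range hA hP hPA, hm])).symm
  have : traceMult A P q ≤ 1 := card_le_one.2 fun a ha b hb => (hm_eq a ha).trans (hm_eq b hb).symm
  omega

end Trace

end AddPlane

section Sums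

variable {n : ℕ} {A : Fin n → Submodule ℂ (Fin 4 → ℂ)} {P l : Submodule ℂ (Fin 4 → ℂ)}
  {U : Finset (Submodule ℂ (Fin 4 → ℂ))}

theorem sum_arrPoints_snoc :
    ∑ p ∈ U with p ∈ arrPoints (Fin.snoc A P), ((arrMult (Fin.snoc A P) p : ℤ) - 1) =
      ∑ p ∈ U with p ∈ arrPoints (Fin.snoc A P) ∧ p ≤ P, (arrMult A p : ℤ)
        + ∑ p ∈ U with p ∈ arrPoints A ∧ ¬ p ≤ P, ((arrMult A p : ℤ) - 1) := by
  rw [← sum_filter_add_sum_filter_not _ (· ≤ P), filter_filter, filter_filter,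
    filter_congr fun p _ => and_congr_left fun hp => mem_arrPoints_snoc_iff_of_not_le hp]
  congr 1 <;> refine sum_congr rfl fun p hp => ?_ <;> rw [arrMult_snoc]
  · rw [if_pos (mem_filter.1 hp).2.2]
    push_cast
    ring
  · rw [if_neg (mem_filter.1 hp).2.2]
    simp

theorem arrPointCount_snoc (hUP : arrPoints (Fin.snoc A P) ⊆ U) (l : Submodule ℂ (Fin 4 → ℂ)) :
    arrPointCount (Fin.snoc A P) l = arrPointCount A l
      + #{q ∈ U | (q ∈ arrPoints (Fin.snoc A P) ∧ q ∉ arrPoints A) ∧ q ≤ l} := by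
  rw [arrPointCount_eq_card hUP, arrPointCount_eq_card (arrPoints_subset_snoc.trans hUP),
    ← card_filter_add_card_filter_not (s := {q ∈ U | q ∈ arrPoints (Fin.snoc A P) ∧ q ≤ l})
      (· ∈ arrPoints A), filter_filter, filter_filter]
  congr 2 <;> refine filter_congr fun q _ => ?_
  · exact ⟨fun h => ⟨h.2, h.1.2⟩, fun h => ⟨⟨arrPoints_subset_snoc h.1, h.2⟩, h.1⟩⟩
  · tauto

theorem arrPointCount_eq_card_of_le {m : ℕ} {B : Fin m → Submodule ℂ (Fin 4 → ℂ)}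
    (hU : arrPoints B ⊆ U) (hl : l ≤ P) :
    arrPointCount B l = #{p ∈ {p ∈ U | p ∈ arrPoints B ∧ p ≤ P} | p ≤ l} := by
  rw [arrPointCount_eq_card hU, filter_filter]
  exact congrArg card <| filter_congr fun p _ =>
    ⟨fun ⟨h, hpl⟩ => ⟨⟨h, hpl.trans hl⟩, hpl⟩, fun ⟨⟨h, _⟩, hpl⟩ => ⟨h, hpl⟩⟩

theorem sum_traceLines_card_filter (S : Finset (Submodule ℂ (Fin 4 → ℂ))) :
    ∑ l ∈ traceLines A P, (#{p ∈ S | p ≤ l} : ℤ) = ∑ p ∈ S, (traceMult A P p : ℤ) := by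
  simpa [traceMult] using sum_card_filter_mul S (traceLines A P) (· ≤ ·) fun _ => (1 : ℤ)

theorem sum_arrPoints_snoc_le_eq (f : Submodule ℂ (Fin 4 → ℂ) → ℤ) :
    ∑ q ∈ U with q ∈ arrPoints (Fin.snoc A P) ∧ q ≤ P, f q =
      ∑ q ∈ U with q ∈ arrPoints A ∧ q ≤ P, f q
        + ∑ q ∈ U with q ∈ arrPoints (Fin.snoc A P) ∧ q ∉ arrPoints A, f q := by
  rw [← sum_filter_add_sum_filter_not _ (· ∈ arrPoints A), filter_filter, filter_filter]
  congr 2 <;> refine filter_congr fun q _ => ?_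
  · exact ⟨fun h => ⟨h.2, h.1.2⟩, fun h => ⟨⟨arrPoints_subset_snoc h.1, h.2⟩, h.1⟩⟩
  · exact ⟨fun h => ⟨h.1.1, h.2⟩, fun h => ⟨⟨h.1,
      by_contra fun hq => h.2 ((mem_arrPoints_snoc_iff_of_not_le hq).1 h.1)⟩, h.2⟩⟩

section Trace

variable (hA : ∀ i, finrank ℂ (A i) = 3) (hP : finrank ℂ P = 3) (hPA : P ∉ Set.range A)
include hA hP hPA

theorem sum_arrLines_snoc (hUL : arrLines (Fin.snoc A P) ⊆ U)
    (f : Submodule ℂ (Fin 4 → ℂ) → ℤ) :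
    ∑ l ∈ U with l ∈ arrLines (Fin.snoc A P), f l * ((arrMult (Fin.snoc A P) l : ℤ) - 1) =
      ∑ l ∈ traceLines A P, f l * arrMult A l
        + ∑ l ∈ U with l ∈ arrLines A ∧ ¬ l ≤ P, f l * ((arrMult A l : ℤ) - 1) := by
  have hT : {l ∈ U | l ∈ arrLines (Fin.snoc A P) ∧ l ≤ P} = traceLines A P := by
    ext l
    refine ⟨fun hl => ?_, fun hl => ?_⟩
    · obtain ⟨-, hl, hlP⟩ := mem_filter.1 hl
      exact (mem_arrLines_snoc_iff_of_le hA hP hPA hlP).1 hl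
    · have hl' := coe_traceLines_subset_arrLines_snoc hA hP hPA hl
      exact mem_filter.2 ⟨hUL hl', hl', le_of_mem_traceLines hl⟩
  rw [← sum_filter_add_sum_filter_not _ (· ≤ P), filter_filter, filter_filter, hT,
    filter_congr fun l _ => and_congr_left fun hl => mem_arrLines_snoc_iff_of_not_le hl]
  congr 1 <;> refine sum_congr rfl fun l hl => ?_ <;> rw [arrMult_snoc]
  · rw [if_pos (le_of_mem_traceLines hl)]
    push_cast
    ring
  · rw [if_neg (mem_filter.1 hl).2.2]
    simp

theorem sum_arrLines (hUL : arrLines (Fin.snoc A P) ⊆ U) (f : Submodule ℂ (Fin 4 → ℂ) → ℤ) :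
    ∑ l ∈ U with l ∈ arrLines A, f l * ((arrMult A l : ℤ) - 1) =
      ∑ l ∈ traceLines A P, f l * ((arrMult A l : ℤ) - 1)
        + ∑ l ∈ U with l ∈ arrLines A ∧ ¬ l ≤ P, f l * ((arrMult A l : ℤ) - 1) := by
  have hT : {l ∈ U | l ∈ arrLines A ∧ l ≤ P} = {l ∈ traceLines A P | 2 ≤ arrMult A l} := by
    ext l
    simp only [mem_filter]
    refine ⟨fun ⟨_, hl, hlP⟩ => (mem_arrLines_iff_of_le hA hP hPA hlP).1 hl, fun hl => ?_⟩
    have hlP := le_of_mem_traceLines hl.1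
    have hl' := (mem_arrLines_iff_of_le hA hP hPA hlP).2 hl
    exact ⟨hUL (arrLines_subset_snoc hl'), hl', hlP⟩
  rw [← sum_filter_add_sum_filter_not _ (· ≤ P), filter_filter, filter_filter, hT]
  congr 1
  refine sum_filter_of_ne fun l hl hne => ?_
  have := ((mem_traceLines_iff hA hP hPA).1 hl).2.2
  by_contra h
  exact hne (by rw [show arrMult A l = 1 by omega]; simp)

theorem sum_traceLines_card_filter_mul_arrMult {S : Finset (Submodule ℂ (Fin 4 → ℂ))}
    (hS : ∀ p ∈ S, p ≤ P) :
    ∑ l ∈ traceLines A P, (#{p ∈ S | p ≤ l} : ℤ) * arrMult A l = ∑ p ∈ S, (arrMult A p : ℤ) := by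
  rw [sum_card_filter_mul]
  refine sum_congr rfl fun p hp => ?_
  rw [arrMult_eq_sum_traceLines hA hP hPA (hS p hp)]
  push_cast
  rfl

theorem sum_traceLines_arrPointCount_snoc (hUP : arrPoints (Fin.snoc A P) ⊆ U) :
    ∑ l ∈ traceLines A P, ((arrPointCount (Fin.snoc A P) l : ℤ) - 1) * arrMult A l =
      ∑ p ∈ U with p ∈ arrPoints (Fin.snoc A P) ∧ p ≤ P, (arrMult A p : ℤ) - n := by
  have hS : ∀ p ∈ {p ∈ U | p ∈ arrPoints (Fin.snoc A P) ∧ p ≤ P}, p ≤ P :=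
    fun p hp => (mem_filter.1 hp).2.2
  have hn : ∑ l ∈ traceLines A P, (arrMult A l : ℤ) = n := by
    exact_mod_cast sum_traceLines_arrMult hA hP hPA
  rw [← sum_traceLines_card_filter_mul_arrMult hA hP hPA hS, ← hn, ← sum_sub_distrib]
  refine sum_congr rfl fun l hl => ?_
  rw [arrPointCount_eq_card_of_le hUP (le_of_mem_traceLines hl)]
  ring

theorem sum_traceLines_arrPointCount (hUP : arrPoints A ⊆ U) :
    ∑ l ∈ traceLines A P, ((arrPointCount A l : ℤ) - 1) * ((arrMult A l : ℤ) - 1) =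
      ∑ p ∈ U with p ∈ arrPoints A ∧ p ≤ P, ((arrMult A p : ℤ) - 1)
        - ∑ p ∈ U with p ∈ arrPoints A ∧ p ≤ P, ((traceMult A P p : ℤ) - 1)
        - n + #(traceLines A P) := by
  set S := {p ∈ U | p ∈ arrPoints A ∧ p ≤ P}
  have hS : ∀ p ∈ S, p ≤ P := fun p hp => (mem_filter.1 hp).2.2
  have h₁ := sum_traceLines_card_filter_mul_arrMult hA hP hPA hS
  have h₂ := sum_traceLines_card_filter (A := A) (P := P) S
  have h₃ := sum_traceLines_arrMult hA hP hPA
  have hexp : ∑ l ∈ traceLines A P, ((arrPointCount A l : ℤ) - 1) * ((arrMult A l : ℤ) - 1) =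
      ∑ l ∈ traceLines A P, ((#{p ∈ S | p ≤ l} : ℤ) * arrMult A l
        - #{p ∈ S | p ≤ l} - arrMult A l + 1) :=
    sum_congr rfl fun l hl => by
      rw [arrPointCount_eq_card_of_le hUP (le_of_mem_traceLines hl)]
      ring
  simp only [hexp, sum_add_distrib, sum_sub_distrib, sum_const, nsmul_eq_mul, mul_one, h₁, h₂]
  push_cast [← h₃]
  ring

end Trace

end Sums

section Increment

variable {n : ℕ} {A : Fin n → Submodule ℂ (Fin 4 → ℂ)} {P : Submodule ℂ (Fin 4 → ℂ)}
  {U : Finset (Submodule ℂ (Fin 4 → ℂ))}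
  (hA : ∀ i, finrank ℂ (A i) = 3) (hP : finrank ℂ P = 3) (hPA : P ∉ Set.range A)
include hA hP hPA

theorem arrDegree_snoc_sub_arrDegree (hUP : arrPoints (Fin.snoc A P) ⊆ U)
    (hUL : arrLines (Fin.snoc A P) ⊆ U) :
    arrDegree (Fin.snoc A P) - arrDegree A = 1 - #(traceLines A P)
      + ∑ p ∈ U with p ∈ arrPoints A ∧ p ≤ P, ((traceMult A P p : ℤ) - 1)
      + ∑ l ∈ U with l ∈ arrLines A ∧ ¬ l ≤ P,
          ((arrPointCount (Fin.snoc A P) l : ℤ) - arrPointCount A l)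
            * ((arrMult A l : ℤ) - 1) := by
  have hUP' := arrPoints_subset_snoc.trans hUP
  rw [arrDegree_eq_sum hUP hUL, arrDegree_eq_sum hUP' (arrLines_subset_snoc.trans hUL),
    sum_arrPoints_snoc, sum_arrLines_snoc hA hP hPA hUL, sum_arrLines hA hP hPA hUL,
    sum_traceLines_arrPointCount_snoc hA hP hPA hUP, sum_traceLines_arrPointCount hA hP hPA hUP']
  have hsplit := sum_filter_add_sum_filter_not {p ∈ U | p ∈ arrPoints A} (· ≤ P)
    fun p => (arrMult A p : ℤ) - 1
  rw [filter_filter, filter_filter] at hsplit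
  have hdiff : ∑ l ∈ U with l ∈ arrLines A ∧ ¬ l ≤ P,
      ((arrPointCount (Fin.snoc A P) l : ℤ) - arrPointCount A l) * ((arrMult A l : ℤ) - 1) =
      ∑ l ∈ U with l ∈ arrLines A ∧ ¬ l ≤ P,
        ((arrPointCount (Fin.snoc A P) l : ℤ) - 1) * ((arrMult A l : ℤ) - 1)
      - ∑ l ∈ U with l ∈ arrLines A ∧ ¬ l ≤ P,
        ((arrPointCount A l : ℤ) - 1) * ((arrMult A l : ℤ) - 1) := by
    rw [← sum_sub_distrib]
    exact sum_congr rfl fun _ _ => by ring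
  push_cast
  linarith

theorem sum_traceMult_sub_one_le_sum_arrLines (hAinj : Function.Injective A)
    (hUP : arrPoints (Fin.snoc A P) ⊆ U) (hUL : arrLines (Fin.snoc A P) ⊆ U) :
    ∑ q ∈ U with q ∈ arrPoints (Fin.snoc A P) ∧ q ∉ arrPoints A, ((traceMult A P q : ℤ) - 1) ≤
      ∑ l ∈ U with l ∈ arrLines A ∧ ¬ l ≤ P,
        ((arrPointCount (Fin.snoc A P) l : ℤ) - arrPointCount A l)
          * ((arrMult A l : ℤ) - 1) := by
  have hnew : ∀ l, (arrPointCount (Fin.snoc A P) l : ℤ) - arrPointCount A l =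
      #{q ∈ {q ∈ U | q ∈ arrPoints (Fin.snoc A P) ∧ q ∉ arrPoints A} | q ≤ l} := fun l => by
    rw [arrPointCount_snoc hUP, filter_filter]
    push_cast
    ring
  simp only [hnew, sum_card_filter_mul]
  refine sum_le_sum fun q hq => ?_
  obtain ⟨hq𝒫, hq'⟩ := (mem_filter.1 hq).2
  obtain ⟨m, hm, hmP, hqm, htm⟩ := exists_arrLines_of_mem_arrPoints_snoc hA hP hPA hAinj hq𝒫 hq'
  have hmU : m ∈ {l ∈ {l ∈ U | l ∈ arrLines A ∧ ¬ l ≤ P} | q ≤ l} :=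
    mem_filter.2 ⟨mem_filter.2 ⟨hUL (arrLines_subset_snoc hm), hm, hmP⟩, hqm⟩
  calc ((traceMult A P q : ℤ) - 1) ≤ (arrMult A m : ℤ) - 1 := by omega
    _ ≤ _ := single_le_sum (f := fun l => (arrMult A l : ℤ) - 1) (fun l hl => by
        have := (mem_filter.1 (mem_filter.1 hl).1).2.1.2
        omega) hmU

theorem card_traceLines_le (hUP : arrPoints (Fin.snoc A P) ⊆ U)
    (hnc : ¬ ∃ q : Submodule ℂ (Fin 4 → ℂ), finrank ℂ q = 1 ∧ ∀ i, q ≤ A i) :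
    (#(traceLines A P) : ℤ) ≤
      ∑ q ∈ U with q ∈ arrPoints (Fin.snoc A P) ∧ q ≤ P, ((traceMult A P q : ℤ) - 1) := by
  have hS : ∀ q, q ∈ {q ∈ U | q ∈ arrPoints (Fin.snoc A P) ∧ q ≤ P} ↔
      finrank ℂ q = 1 ∧ 2 ≤ traceMult A P q := by
    intro q
    rw [mem_filter]
    refine ⟨fun ⟨_, hq, hqP⟩ => ⟨hq.1, (mem_arrPoints_snoc_iff_of_le hA hP hPA hq.1 hqP).1 hq⟩,
      fun ⟨hq, ht⟩ => ?_⟩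
    obtain ⟨l, hl⟩ := card_pos.1 (lt_of_lt_of_le two_pos ht)
    have hqP := (mem_filter.1 hl).2.trans (le_of_mem_traceLines (mem_filter.1 hl).1)
    have hq𝒫 := (mem_arrPoints_snoc_iff_of_le hA hP hPA hq hqP).2 ht
    exact ⟨hUP hq𝒫, hq𝒫, hqP⟩
  have h := card_add_card_le_sum_of_not_concurrent hP
    (fun l hl => ⟨finrank_of_mem_traceLines hA hP hPA hl, le_of_mem_traceLines hl⟩) hS
    fun ⟨q, hq, hqT⟩ => hnc ⟨q, hq, fun i => (hqT _ (inf_mem_traceLines i)).trans inf_le_right⟩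
  have h' : (#(traceLines A P) : ℤ) + #{q ∈ U | q ∈ arrPoints (Fin.snoc A P) ∧ q ≤ P} ≤
      ∑ q ∈ U with q ∈ arrPoints (Fin.snoc A P) ∧ q ≤ P, (traceMult A P q : ℤ) := by
    exact_mod_cast h
  simp only [sum_sub_distrib, sum_const, nsmul_eq_mul, mul_one]
  linarith

end Increment

theorem arrDegree_lt_arrDegree_snoc {n : ℕ} {A : Fin n → Submodule ℂ (Fin 4 → ℂ)}
    {P : Submodule ℂ (Fin 4 → ℂ)} (hA : ∀ i, finrank ℂ (A i) = 3) (hP : finrank ℂ P = 3)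
    (hAinj : Function.Injective A) (hPA : P ∉ Set.range A)
    (hnc : ¬ ∃ q : Submodule ℂ (Fin 4 → ℂ), finrank ℂ q = 1 ∧ ∀ i, q ≤ A i) :
    arrDegree A < arrDegree (Fin.snoc A P) := by
  have hH : ∀ i, finrank ℂ ((Fin.snoc A P : Fin (n + 1) → Submodule ℂ (Fin 4 → ℂ)) i) = 3 :=
    Fin.lastCases (by rw [Fin.snoc_last]; exact hP) fun i => by rw [Fin.snoc_castSucc]; exact hA i
  have hinj := Fin.snoc_injective_of_injective hAinj hPA
  set U := ((arrPoints_finite hH hinj).union (arrLines_finite hH hinj)).toFinset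
  have hUP : arrPoints (Fin.snoc A P) ⊆ U := by simp [U]
  have hUL : arrLines (Fin.snoc A P) ⊆ U := by simp [U]
  have hdiff := arrDegree_snoc_sub_arrDegree hA hP hPA hUP hUL
  have hnew := sum_traceMult_sub_one_le_sum_arrLines hA hP hPA hAinj hUP hUL
  have htrace := card_traceLines_le hA hP hPA hUP hnc
  have hsplit := sum_arrPoints_snoc_le_eq (U := U) (A := A) (P := P)
    fun q => (traceMult A P q : ℤ) - 1
  linarith

/-- Lemma 8: adding one more distinct plane to an arrangement
`𝒜` of `N` distinct planes in `ℙ³` with `d_𝒜 ≠ 0` strictly increases the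
degree of the polar map. -/
theorem arrDegree_lt_of_add_plane (N : ℕ)
    (H : Fin (N + 1) → Submodule ℂ (Fin 4 → ℂ))
    (hH : ∀ i, finrank ℂ (H i) = 3) (hinj : Function.Injective H)
    (hd : arrDegree (fun i : Fin N => H i.castSucc) ≠ 0) :
    arrDegree (fun i : Fin N => H i.castSucc) < arrDegree H := by
  obtain ⟨A, P, rfl⟩ : ∃ A P, H = Fin.snoc A P := ⟨_, _, (Fin.snoc_init_self H).symm⟩
  simp only [Fin.snoc_castSucc] at hd ⊢
  obtain ⟨hAinj, hPA⟩ := Fin.snoc_injective_iff.1 hinj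
  have hA : ∀ i, finrank ℂ (A i) = 3 := fun i => by
    have := hH i.castSucc
    rwa [Fin.snoc_castSucc] at this
  have hP : finrank ℂ P = 3 := by
    have := hH (Fin.last N)
    rwa [Fin.snoc_last] at this
  rcases Nat.lt_or_ge N 2 with hN | hN
  · interval_cases N
    · simp [arrDegree_of_le_one]
    · exact absurd (by simpa using arrDegree_of_le_one (A := A) le_rfl) hd
  · refine arrDegree_lt_arrDegree_snoc hA hP hAinj hPA fun ⟨q, hq, hqA⟩ => hd ?_
    exact arrDegree_eq_zero_of_concurrent hA hAinj hN hq hqA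
end

section
/- Let $\mathcal{A}$ be an arrangement of $N$ distinct planes in $\mathbb{P}^3$ whose polar map is birational ($d_{\mathcal{A}} = 1$). Then $N = 4$ and the four planes are in general linear position (no point lies on all four, equivalently the four linear forms are linearly independent). -/
open Module

open scoped Classical


noncomputable section

local notation "Sub" => Submodule ℂ (Fin 4 → ℂ)

namespace ArrAux

lemma frV : finrank ℂ (Fin 4 → ℂ) = 4 := Module.finrank_fin_fun ℂ

lemma fr_le4 (s : Sub) : finrank ℂ s ≤ 4 := by
  have := Submodule.finrank_le s; rwa [frV] at this

lemma sup_add_inf (s t : Sub) :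
    finrank ℂ ↥(s ⊔ t) + finrank ℂ ↥(s ⊓ t) = finrank ℂ s + finrank ℂ t :=
  Submodule.finrank_sup_add_finrank_inf_eq s t

/-- two distinct planes meet in a line -/
lemma inf_planes {A B : Sub} (hA : finrank ℂ A = 3) (hB : finrank ℂ B = 3)
    (hAB : A ≠ B) : finrank ℂ ↥(A ⊓ B) = 2 := by
  have hsup : finrank ℂ ↥(A ⊔ B) = 4 := by
    refine le_antisymm (fr_le4 _) ?_
    by_contra h
    push_neg at h
    have hle : finrank ℂ ↥(A ⊔ B) ≤ finrank ℂ A := by omega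
    have e : A = A ⊔ B := Submodule.eq_of_le_of_finrank_le le_sup_left hle
    have hBA : B ≤ A := e ▸ le_sup_right
    exact hAB (Submodule.eq_of_le_of_finrank_le hBA (by omega)).symm
  have := sup_add_inf A B
  omega

/-- a line inside two distinct planes equals their intersection -/
lemma line_eq_inf {A B l : Sub} (hA : finrank ℂ A = 3) (hB : finrank ℂ B = 3)
    (hAB : A ≠ B) (hl : finrank ℂ l = 2) (h1 : l ≤ A) (h2 : l ≤ B) : l = A ⊓ B :=
  Submodule.eq_of_le_of_finrank_le (le_inf h1 h2)
    (by rw [inf_planes hA hB hAB, hl])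

lemma line_eq_line {l l' : Sub} (hl : finrank ℂ l = 2) (hl' : finrank ℂ l' = 2)
    (h : l ≤ l') : l = l' :=
  Submodule.eq_of_le_of_finrank_le h (by omega)

lemma lines_inf_rank_le_one {l₁ l₂ : Sub} (h1 : finrank ℂ l₁ = 2)
    (h2 : finrank ℂ l₂ = 2) (hne : l₁ ≠ l₂) : finrank ℂ ↥(l₁ ⊓ l₂) ≤ 1 := by
  by_contra h
  push_neg at h
  have e1 : l₁ ⊓ l₂ = l₁ := Submodule.eq_of_le_of_finrank_le inf_le_left (by omega)
  have e2 : l₁ ⊓ l₂ = l₂ := Submodule.eq_of_le_of_finrank_le inf_le_right (by omega)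
  exact hne (e1 ▸ e2)

/-- a point on two distinct lines is their intersection -/
lemma point_eq_inf {p l₁ l₂ : Sub} (hp : finrank ℂ p = 1) (h1 : finrank ℂ l₁ = 2)
    (h2 : finrank ℂ l₂ = 2) (hne : l₁ ≠ l₂) (hp1 : p ≤ l₁) (hp2 : p ≤ l₂) :
    p = l₁ ⊓ l₂ :=
  Submodule.eq_of_le_of_finrank_le (le_inf hp1 hp2)
    (by have := lines_inf_rank_le_one h1 h2 hne; omega)

/-- two distinct lines inside a plane meet in a point -/
lemma lines_in_plane_inf {l₁ l₂ A : Sub} (h1 : finrank ℂ l₁ = 2)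
    (h2 : finrank ℂ l₂ = 2) (hne : l₁ ≠ l₂) (hA : finrank ℂ A = 3)
    (hl1 : l₁ ≤ A) (hl2 : l₂ ≤ A) : finrank ℂ ↥(l₁ ⊓ l₂) = 1 := by
  have hsup : finrank ℂ ↥(l₁ ⊔ l₂) = 3 := by
    refine le_antisymm ?_ ?_
    · have := Submodule.finrank_mono (sup_le hl1 hl2); omega
    · by_contra h
      push_neg at h
      have : l₁ = l₁ ⊔ l₂ := Submodule.eq_of_le_of_finrank_le le_sup_left (by omega)
      exact hne (line_eq_line h2 h1 (this ▸ le_sup_right)).symm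
  have := sup_add_inf l₁ l₂
  omega

lemma points_sup_rank {p q : Sub} (hp : finrank ℂ p = 1) (hq : finrank ℂ q = 1)
    (hne : p ≠ q) : finrank ℂ ↥(p ⊔ q) = 2 := by
  have hinf : finrank ℂ ↥(p ⊓ q) = 0 := by
    by_contra h
    have hle := Submodule.finrank_mono (inf_le_left (a := p) (b := q))
    have e1 : p ⊓ q = p := Submodule.eq_of_le_of_finrank_le inf_le_left (by omega)
    have e2 : p ⊓ q = q := Submodule.eq_of_le_of_finrank_le inf_le_right (by omega)
    exact hne (e1 ▸ e2)
  have := sup_add_inf p q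
  omega

lemma exists_point_le {K : Sub} (h : K ≠ ⊥) :
    ∃ p : Sub, finrank ℂ p = 1 ∧ p ≤ K := by
  obtain ⟨v, hv, hv0⟩ := Submodule.exists_mem_ne_zero_of_ne_bot h
  exact ⟨Submodule.span ℂ {v}, finrank_span_singleton hv0,
    (Submodule.span_singleton_le_iff_mem v K).mpr hv⟩

lemma iInf_succ {m : ℕ} (f : Fin (m + 1) → Sub) :
    (⨅ i, f i) = f 0 ⊓ ⨅ j : Fin m, f j.succ := by
  refine le_antisymm (le_inf (iInf_le _ 0) (le_iInf fun j => iInf_le _ _)) ?_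
  refine le_iInf fun i => ?_
  refine Fin.cases inf_le_left (fun j => le_trans inf_le_right (iInf_le _ j)) i

lemma finrank_iInf_ge {m : ℕ} (f : Fin m → Sub) (h3 : ∀ i, finrank ℂ (f i) = 3) :
    4 ≤ finrank ℂ ↥(⨅ i, f i) + m := by
  induction m with
  | zero =>
    rw [iInf_of_empty]
    rw [finrank_top]
    rw [frV]
  | succ k IH =>
    rw [iInf_succ]
    have hIH : 4 ≤ finrank ℂ ↥(⨅ j : Fin k, f j.succ) + k :=
      IH (fun j => f j.succ) (fun j => h3 _)
    have hsai := sup_add_inf (f 0) (⨅ j : Fin k, f j.succ)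
    have h4 := fr_le4 (f 0 ⊔ ⨅ j : Fin k, f j.succ)
    have h0 := h3 0
    omega

lemma essential_four_le {m : ℕ} (f : Fin m → Sub) (h3 : ∀ i, finrank ℂ (f i) = 3)
    (he : (⨅ i, f i) = ⊥) : 4 ≤ m := by
  have := finrank_iInf_ge f h3
  rw [he] at this
  rw [finrank_bot] at this
  omega


open Finset in
/-- multiplicity as a Finset card -/
def multF {n : ℕ} (G : Fin n → Sub) (W : Sub) : ℕ :=
  (Finset.univ.filter fun i => W ≤ G i).card

lemma arrMult_eq {n : ℕ} (G : Fin n → Sub) (W : Sub) :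
    arrMult G W = multF G W := by
  classical
  rw [arrMult, multF]
  rw [show {i : Fin n | W ≤ G i} = ↑(Finset.univ.filter fun i => W ≤ G i) by
    ext i; simp]
  rw [Set.ncard_coe_finset]

variable {n : ℕ}

lemma mem_lines_iff {G : Fin n → Sub} {l : Sub} :
    l ∈ arrLines G ↔ finrank ℂ l = 2 ∧ 2 ≤ multF G l := by
  rw [arrLines, Set.mem_setOf_eq, arrMult_eq]

lemma mem_points_iff {G : Fin n → Sub} {p : Sub} :
    p ∈ arrPoints G ↔ finrank ℂ p = 1 ∧ 3 ≤ multF G p ∧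
      ¬ ∃ l : Sub, finrank ℂ l = 2 ∧ ∀ i, p ≤ G i → l ≤ G i := by
  rw [arrPoints, Set.mem_setOf_eq, arrMult_eq]

lemma le_of_mem_multset {G : Fin n → Sub} {W : Sub} {i : Fin n}
    (h : i ∈ Finset.univ.filter fun j => W ≤ G j) : W ≤ G i := by
  simpa using h

lemma two_le_mult_iff {G : Fin n → Sub} {W : Sub} (h : 2 ≤ multF G W) :
    ∃ i j, i ≠ j ∧ W ≤ G i ∧ W ≤ G j := by
  classical
  obtain ⟨i, hi, j, hj, hij⟩ := Finset.one_lt_card.mp h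
  exact ⟨i, j, hij, le_of_mem_multset hi, le_of_mem_multset hj⟩

lemma mult_two_of_le {G : Fin n → Sub} {W : Sub} {i j : Fin n} (hij : i ≠ j)
    (hi : W ≤ G i) (hj : W ≤ G j) : 2 ≤ multF G W := by
  classical
  rw [multF]
  apply Finset.one_lt_card.mpr
  exact ⟨i, by simpa using hi, j, by simpa using hj, hij⟩

section withG
variable {G : Fin n → Sub} (hG3 : ∀ i, finrank ℂ (G i) = 3)
  (hGinj : Function.Injective G)

include hG3 hGinj

lemma inf_mem_lines {i j : Fin n} (hij : i ≠ j) : G i ⊓ G j ∈ arrLines G := by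
  refine mem_lines_iff.mpr ⟨inf_planes (hG3 i) (hG3 j) (fun h => hij (hGinj h)), ?_⟩
  exact mult_two_of_le hij inf_le_left inf_le_right

lemma line_rep {l : Sub} (hl : l ∈ arrLines G) : ∃ i j, i ≠ j ∧ l = G i ⊓ G j := by
  obtain ⟨hl2, hm⟩ := mem_lines_iff.mp hl
  obtain ⟨i, j, hij, hi, hj⟩ := two_le_mult_iff hm
  exact ⟨i, j, hij, line_eq_inf (hG3 i) (hG3 j) (fun h => hij (hGinj h)) hl2 hi hj⟩

lemma lines_finite : (arrLines G).Finite := by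
  apply Set.Finite.subset (Set.finite_range fun ij : Fin n × Fin n => G ij.1 ⊓ G ij.2)
  intro l hl
  obtain ⟨i, j, _, hrep⟩ := line_rep hG3 hGinj hl
  exact ⟨(i, j), hrep.symm⟩

/-- if every line of the arrangement through `p` is `≤ G i`, and `p` has
multiplicity ≥ 3, then the planes through `p` form a pencil. -/
lemma pencil_of_lines_in_plane {p : Sub} {i : Fin n} (hp1 : finrank ℂ p = 1)
    (hpi : p ≤ G i) (h3 : 3 ≤ multF G p)
    (hall : ∀ l ∈ arrLines G, p ≤ l → l ≤ G i) :
    ∃ l : Sub, finrank ℂ l = 2 ∧ ∀ m, p ≤ G m → l ≤ G m := by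
  classical
  -- find j₁ ≠ i with p ≤ G j₁
  have hcard : 2 ≤ ((Finset.univ.filter fun j => p ≤ G j).erase i).card := by
    have := Finset.pred_card_le_card_erase (s := Finset.univ.filter fun j => p ≤ G j) (a := i)
    rw [multF] at h3; omega
  obtain ⟨j₁, hj₁⟩ := Finset.card_pos.mp (by omega : 0 < ((Finset.univ.filter fun j => p ≤ G j).erase i).card)
  have hj₁i : j₁ ≠ i := Finset.ne_of_mem_erase hj₁
  have hpj₁ : p ≤ G j₁ := le_of_mem_multset (Finset.mem_of_mem_erase hj₁)
  refine ⟨G j₁ ⊓ G i, inf_planes (hG3 j₁) (hG3 i) (fun h => hj₁i (hGinj h)), ?_⟩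
  intro m hpm
  by_cases hmi : m = i
  · subst hmi; exact inf_le_right
  by_cases hmj : m = j₁
  · subst hmj; exact inf_le_left
  · -- G m ⊓ G j₁ is a line through p, hence ≤ G i, hence = G j₁ ⊓ G i
    have hl' : G m ⊓ G j₁ ∈ arrLines G := inf_mem_lines hG3 hGinj hmj
    have hpl' : p ≤ G m ⊓ G j₁ := le_inf hpm hpj₁
    have hle : G m ⊓ G j₁ ≤ G i := hall _ hl' hpl'
    have heq : G m ⊓ G j₁ = G j₁ ⊓ G i := by
      refine line_eq_line (mem_lines_iff.mp hl').1
        (inf_planes (hG3 j₁) (hG3 i) (fun h => hj₁i (hGinj h))) (le_inf inf_le_right hle)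
    exact heq ▸ inf_le_left

lemma points_finite : (arrPoints G).Finite := by
  classical
  apply Set.Finite.subset (Set.finite_range fun x : (Fin n × Fin n) × (Fin n × Fin n) =>
    (G x.1.1 ⊓ G x.1.2) ⊓ (G x.2.1 ⊓ G x.2.2))
  intro p hp
  obtain ⟨hp1, hp3, hnp⟩ := mem_points_iff.mp hp
  -- there exist two distinct lines through p
  obtain ⟨i, j, hij, hpi, hpj⟩ := two_le_mult_iff (by omega : 2 ≤ multF G p)
  have hl₁ : G i ⊓ G j ∈ arrLines G := inf_mem_lines hG3 hGinj hij
  by_cases hex : ∃ l₂ ∈ arrLines G, p ≤ l₂ ∧ l₂ ≠ G i ⊓ G j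
  · obtain ⟨l₂, hl₂, hpl₂, hne⟩ := hex
    obtain ⟨a, b, hab, hrep⟩ := line_rep hG3 hGinj hl₂
    have := point_eq_inf hp1 (mem_lines_iff.mp hl₂).1 (mem_lines_iff.mp hl₁).1 hne
      hpl₂ (le_inf hpi hpj)
    exact ⟨((a, b), (i, j)), by simp only; rw [← hrep, ← this]⟩
  · exfalso
    push_neg at hex
    refine hnp (pencil_of_lines_in_plane hG3 hGinj hp1 hpi hp3 ?_)
    intro l hl hpl
    have heq := hex l hl hpl
    subst heq
    exact inf_le_left

/-- two distinct lines through a point kill the pencil condition -/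
lemma nonpencil_of_two_lines {p l₁ l₂ : Sub} (hl₁ : l₁ ∈ arrLines G)
    (hl₂ : l₂ ∈ arrLines G) (hne : l₁ ≠ l₂) (hp1 : p ≤ l₁) (hp2 : p ≤ l₂) :
    ¬ ∃ l : Sub, finrank ℂ l = 2 ∧ ∀ i, p ≤ G i → l ≤ G i := by
  rintro ⟨l, hl2, hall⟩
  have key : ∀ l' ∈ arrLines G, p ≤ l' → l = l' := by
    intro l' hl' hpl'
    obtain ⟨i, j, hij, hrep⟩ := line_rep hG3 hGinj hl'
    have hli : l ≤ G i := hall i (hpl'.trans (hrep ▸ inf_le_left))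
    have hlj : l ≤ G j := hall j (hpl'.trans (hrep ▸ inf_le_right))
    exact line_eq_line hl2 (mem_lines_iff.mp hl').1 (hrep ▸ le_inf hli hlj)
  exact hne ((key l₁ hl₁ hp1).symm.trans (key l₂ hl₂ hp2))

end withG

/-- `k_l - 1` as an integer -/
def kk {n : ℕ} (G : Fin n → Sub) (W : Sub) : ℤ := (multF G W : ℤ) - 1

/-- `s_p`: sum of `k_l - 1` over lines through `p` -/
def sZ {n : ℕ} (G : Fin n → Sub) (LT : Finset Sub) (p : Sub) : ℤ :=
  ∑ l ∈ LT.filter (fun l => p ≤ l), kk G l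

/-- `m_p = s_p - (k_p - 1)` -/
def mZ {n : ℕ} (G : Fin n → Sub) (LT : Finset Sub) (p : Sub) : ℤ :=
  sZ G LT p - kk G p

section counting

variable {n : ℕ} {G : Fin n → Sub} (hG3 : ∀ i, finrank ℂ (G i) = 3)
  (hGinj : Function.Injective G)
  {LT : Finset Sub} (hLT : ∀ l, l ∈ LT ↔ l ∈ arrLines G)

lemma one_le_kk {l : Sub} (hl : l ∈ arrLines G) : 1 ≤ kk G l := by
  have := (mem_lines_iff.mp hl).2
  rw [kk]; omega

include hLT in
lemma one_le_kk' {l : Sub} (hl : l ∈ LT) : 1 ≤ kk G l :=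
  one_le_kk ((hLT l).mp hl)

include hG3 hGinj hLT in
/-- Local identity: in the plane `G i`, the lines through `p ≤ G i` account for
all the other planes through `p`. -/
lemma local_identity (i : Fin n) {p : Sub} (hp1 : finrank ℂ p = 1)
    (hpi : p ≤ G i) :
    ∑ l ∈ LT.filter (fun l => p ≤ l ∧ l ≤ G i), kk G l = (multF G p : ℤ) - 1 := by
  classical
  set A : Finset (Fin n) := (Finset.univ.filter fun j => p ≤ G j).erase i with hA
  have hcardA : A.card = multF G p - 1 := by
    rw [hA, Finset.card_erase_of_mem (by simpa using hpi)]; rfl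
  have h1p : 1 ≤ multF G p := by
    rw [multF]
    exact Finset.card_pos.mpr ⟨i, by simpa using hpi⟩
  set T := LT.filter (fun l => p ≤ l ∧ l ≤ G i) with hT
  have hmap : ∀ j ∈ A, G j ⊓ G i ∈ T := by
    intro j hj
    have hji : j ≠ i := Finset.ne_of_mem_erase hj
    have hpj : p ≤ G j := le_of_mem_multset (Finset.mem_of_mem_erase hj)
    rw [hT, Finset.mem_filter]
    exact ⟨(hLT _).mpr (inf_mem_lines hG3 hGinj hji), le_inf hpj hpi, inf_le_right⟩
  have hcard := Finset.card_eq_sum_card_fiberwise hmap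
  have hfib : ∀ l ∈ T, (A.filter fun j => G j ⊓ G i = l).card = multF G l - 1 := by
    intro l hl
    rw [hT, Finset.mem_filter] at hl
    obtain ⟨hlLT, hpl, hli⟩ := hl
    have hl2 : finrank ℂ l = 2 := (mem_lines_iff.mp ((hLT l).mp hlLT)).1
    have : (A.filter fun j => G j ⊓ G i = l)
        = (Finset.univ.filter fun j => l ≤ G j).erase i := by
      ext j
      simp only [hA, Finset.mem_filter, Finset.mem_erase, Finset.mem_univ, true_and,
        and_true]
      constructor
      · rintro ⟨⟨hji, hpj⟩, hlj⟩
        exact ⟨hji, hlj ▸ inf_le_left⟩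
      · rintro ⟨hji, hlj⟩
        refine ⟨⟨hji, hpl.trans hlj⟩, ?_⟩
        exact (line_eq_inf (hG3 j) (hG3 i) (fun h => hji (hGinj h)) hl2 hlj hli).symm
    rw [this, Finset.card_erase_of_mem (by simpa using hli)]; rfl
  have hsum : ∑ l ∈ T, (multF G l - 1) = multF G p - 1 := by
    rw [← hcardA, hcard]
    exact (Finset.sum_congr rfl hfib).symm
  calc ∑ l ∈ T, kk G l = ∑ l ∈ T, ((multF G l - 1 : ℕ) : ℤ) := by
        refine Finset.sum_congr rfl fun l hl => ?_
        have h2 : 2 ≤ multF G l := by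
          rw [hT, Finset.mem_filter] at hl
          exact (mem_lines_iff.mp ((hLT l).mp hl.1)).2
        rw [kk]; omega
    _ = ((∑ l ∈ T, (multF G l - 1) : ℕ) : ℤ) := by rw [Nat.cast_sum]
    _ = ((multF G p - 1 : ℕ) : ℤ) := by rw [hsum]
    _ = (multF G p : ℤ) - 1 := by omega

include hG3 hGinj hLT in
/-- `m_p` equals the sum over lines through `p` NOT inside a chosen plane. -/
lemma mZ_eq_outer (i : Fin n) {p : Sub} (hp1 : finrank ℂ p = 1) (hpi : p ≤ G i) :
    mZ G LT p = ∑ l ∈ LT.filter (fun l => p ≤ l ∧ ¬ l ≤ G i), kk G l := by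
  have hsplit := Finset.sum_filter_add_sum_filter_not (LT.filter (fun l => p ≤ l))
    (fun l => l ≤ G i) (kk G)
  rw [Finset.filter_filter, Finset.filter_filter] at hsplit
  rw [mZ, sZ, ← hsplit, local_identity hG3 hGinj hLT i hp1 hpi, kk]
  ring

include hG3 hGinj hLT in
/-- `m_p ≥ 1` for `p ∈ 𝒫`. -/
lemma one_le_mZ {p : Sub} (hp : p ∈ arrPoints G) : 1 ≤ mZ G LT p := by
  classical
  obtain ⟨hp1, hp3, hnp⟩ := mem_points_iff.mp hp
  obtain ⟨i, hi⟩ := Finset.card_pos.mp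
    (lt_of_lt_of_le (by norm_num) hp3 : 0 < (Finset.univ.filter fun j => p ≤ G j).card)
  have hpi : p ≤ G i := le_of_mem_multset hi
  rw [mZ_eq_outer hG3 hGinj hLT i hp1 hpi]
  set R := LT.filter (fun l => p ≤ l ∧ ¬ l ≤ G i) with hR
  have hne : R.Nonempty := by
    by_contra hemp
    rw [Finset.not_nonempty_iff_eq_empty] at hemp
    refine hnp (pencil_of_lines_in_plane hG3 hGinj hp1 hpi hp3 ?_)
    intro l hl hpl
    by_contra hnle
    have : l ∈ R := by
      rw [hR, Finset.mem_filter]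
      exact ⟨(hLT l).mpr hl, hpl, hnle⟩
    rw [hemp] at this
    exact absurd this (Finset.notMem_empty l)
  obtain ⟨l₀, hl₀⟩ := hne
  calc (1 : ℤ) ≤ kk G l₀ := one_le_kk' hLT (Finset.mem_filter.mp hl₀).1
    _ ≤ ∑ l ∈ R, kk G l := Finset.single_le_sum
        (fun l hl => (one_le_kk' hLT (Finset.mem_filter.mp hl).1).trans' (by norm_num))
        hl₀

include hG3 hGinj hLT in
lemma zero_le_mZ {p : Sub} (hp : p ∈ arrPoints G) : 0 ≤ mZ G LT p :=
  le_trans (by norm_num) (one_le_mZ hG3 hGinj hLT hp)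

include hG3 hGinj hLT in
/-- `m_p ≥ c_p - 1`: lines through `p` inside the plane `G i₀`, minus one,
bound `m_p` from below, provided `p` lies on some other plane `G j`. -/
lemma mZ_ge_c_sub_one {p : Sub} (hp1 : finrank ℂ p = 1) {i₀ j : Fin n}
    (hji : j ≠ i₀) (hpj : p ≤ G j) :
    ((LT.filter fun l => p ≤ l ∧ l ≤ G i₀).card : ℤ) - 1 ≤ mZ G LT p := by
  classical
  rw [mZ_eq_outer hG3 hGinj hLT j hp1 hpj]
  set R := LT.filter (fun l => p ≤ l ∧ ¬ l ≤ G j) with hR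
  set S₀ := (LT.filter fun l => p ≤ l ∧ l ≤ G i₀).erase (G i₀ ⊓ G j) with hS₀
  have hsub : S₀ ⊆ R := by
    intro l hl
    rw [hS₀, Finset.mem_erase, Finset.mem_filter] at hl
    obtain ⟨hlne, hlLT, hpl, hli₀⟩ := hl
    rw [hR, Finset.mem_filter]
    refine ⟨hlLT, hpl, fun hlj => ?_⟩
    exact hlne (line_eq_inf (hG3 i₀) (hG3 j) (fun h => hji (hGinj h.symm))
      (mem_lines_iff.mp ((hLT l).mp hlLT)).1 hli₀ hlj)
  have h1 : (S₀.card : ℤ) ≤ ∑ l ∈ S₀, kk G l := by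
    calc (S₀.card : ℤ) = ∑ _l ∈ S₀, (1 : ℤ) := by
          rw [Finset.sum_const, nsmul_eq_mul, mul_one]
      _ ≤ ∑ l ∈ S₀, kk G l := Finset.sum_le_sum fun l hl =>
          one_le_kk' hLT (Finset.mem_filter.mp (Finset.mem_of_mem_erase hl)).1
  have h2 : ∑ l ∈ S₀, kk G l ≤ ∑ l ∈ R, kk G l := by
    refine Finset.sum_le_sum_of_subset_of_nonneg hsub fun l hl _ => ?_
    exact le_trans (by norm_num) (one_le_kk' hLT (Finset.mem_filter.mp hl).1)
  have h3 : ((LT.filter fun l => p ≤ l ∧ l ≤ G i₀).card : ℤ) - 1 ≤ (S₀.card : ℤ) := by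
    have := Finset.pred_card_le_card_erase
      (s := LT.filter fun l => p ≤ l ∧ l ≤ G i₀) (a := G i₀ ⊓ G j)
    rw [hS₀]
    omega
  linarith

include hG3 hGinj hLT in
lemma arrDegree_finset {PT : Finset Sub} (hPT : ∀ p, p ∈ PT ↔ p ∈ arrPoints G) :
    arrDegree G = (n : ℤ) - 1 - (∑ p ∈ PT, kk G p) +
      ∑ l ∈ LT, (((PT.filter (· ≤ l)).card : ℤ) - 1) * kk G l := by
  classical
  have hPfin := points_finite hG3 hGinj
  have hLfin := lines_finite hG3 hGinj
  have hPT' : hPfin.toFinset = PT := by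
    ext p; rw [Set.Finite.mem_toFinset, hPT]
  have hLT' : hLfin.toFinset = LT := by
    ext l; rw [Set.Finite.mem_toFinset, hLT]
  rw [arrDegree]
  rw [finsum_mem_eq_finite_toFinset_sum _ hPfin, finsum_mem_eq_finite_toFinset_sum _ hLfin]
  rw [hPT', hLT']
  congr 1
  · congr 1
    refine Finset.sum_congr rfl fun p _ => ?_
    rw [arrMult_eq, kk]
  · refine Finset.sum_congr rfl fun l _ => ?_
    rw [arrMult_eq, kk]
    congr 2
    rw [show {p ∈ arrPoints G | p ≤ l} = ↑(PT.filter (· ≤ l)) by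
      ext q
      simp only [Set.mem_setOf_eq, Finset.coe_filter, ← hPT q]]
    rw [Set.ncard_coe_finset]

include hG3 hGinj hLT in
/-- the degree in the `m_p` form -/
lemma degree_mform {PT : Finset Sub} (hPT : ∀ p, p ∈ PT ↔ p ∈ arrPoints G) :
    arrDegree G = (n : ℤ) - 1 - (∑ l ∈ LT, kk G l) + ∑ p ∈ PT, mZ G LT p := by
  classical
  rw [arrDegree_finset hG3 hGinj hLT hPT]
  have key : ∑ l ∈ LT, ((PT.filter (· ≤ l)).card : ℤ) * kk G l
      = ∑ p ∈ PT, sZ G LT p := by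
    have step1 : ∀ l, ((PT.filter (· ≤ l)).card : ℤ) * kk G l
        = ∑ p ∈ PT, if p ≤ l then kk G l else 0 := by
      intro l
      rw [← Finset.sum_filter, Finset.sum_const, nsmul_eq_mul]
    calc ∑ l ∈ LT, ((PT.filter (· ≤ l)).card : ℤ) * kk G l
        = ∑ l ∈ LT, ∑ p ∈ PT, if p ≤ l then kk G l else 0 :=
          Finset.sum_congr rfl fun l _ => step1 l
      _ = ∑ p ∈ PT, ∑ l ∈ LT, if p ≤ l then kk G l else 0 := Finset.sum_comm
      _ = ∑ p ∈ PT, sZ G LT p := by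
          refine Finset.sum_congr rfl fun p _ => ?_
          rw [sZ, Finset.sum_filter]
  have e1 : ∑ l ∈ LT, (((PT.filter (· ≤ l)).card : ℤ) - 1) * kk G l
      = (∑ p ∈ PT, sZ G LT p) - ∑ l ∈ LT, kk G l := by
    rw [← key, ← Finset.sum_sub_distrib]
    exact Finset.sum_congr rfl fun l _ => by ring
  have e2 : ∑ p ∈ PT, mZ G LT p = (∑ p ∈ PT, sZ G LT p) - ∑ p ∈ PT, kk G p := by
    rw [← Finset.sum_sub_distrib]
    exact Finset.sum_congr rfl fun p _ => rfl
  rw [e1]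
  rw [e2]
  ring

end counting

lemma multF_le {n : ℕ} (G : Fin n → Sub) (W : Sub) : multF G W ≤ n := by
  classical
  rw [multF]
  exact le_trans (Finset.card_le_univ _) (le_of_eq (by simp))

/-- Lemma A: a non-essential arrangement (all planes through a common point)
has degree 0, provided it is nonempty. -/
lemma degree_of_nonessential {n : ℕ} {G : Fin n → Sub}
    (hG3 : ∀ i, finrank ℂ (G i) = 3) (hGinj : Function.Injective G)
    (hn : 1 ≤ n) (hness : (⨅ i, G i) ≠ ⊥) : arrDegree G = 0 := by
  classical
  obtain ⟨p0, hp01, hp0le⟩ := exists_point_le hness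
  have hball : ∀ i, p0 ≤ G i := fun i => hp0le.trans (iInf_le _ i)
  have hmult : multF G p0 = n := by
    rw [multF, Finset.filter_true_of_mem (fun i _ => hball i), Finset.card_univ,
      Fintype.card_fin]
  have hPsub : ∀ q ∈ arrPoints G, q = p0 := by
    intro q hq
    obtain ⟨hq1, _hq3, hnp⟩ := mem_points_iff.mp hq
    by_contra hne
    exact hnp ⟨p0 ⊔ q, points_sup_rank hp01 hq1 (fun h => hne (h.symm)), fun i hqi =>
      sup_le (hball i) hqi⟩
  have hLS : ∀ l ∈ arrLines G, p0 ≤ l := by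
    intro l hl
    obtain ⟨i, j, _hij, hrep⟩ := line_rep hG3 hGinj hl
    rw [hrep]
    exact le_inf (hball i) (hball j)
  by_cases hp0P : p0 ∈ arrPoints G
  · -- 𝒫 = {p0}, every line contains p0, a_l = 1
    have hPT : ∀ p, p ∈ ({p0} : Finset Sub) ↔ p ∈ arrPoints G := by
      intro p
      simp only [Finset.mem_singleton]
      exact ⟨fun h => h ▸ hp0P, fun h => hPsub p h⟩
    have hLfin := lines_finite hG3 hGinj
    have hLT : ∀ l, l ∈ hLfin.toFinset ↔ l ∈ arrLines G := fun l =>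
      Set.Finite.mem_toFinset _
    rw [arrDegree_finset hG3 hGinj hLT hPT]
    have hz : ∑ l ∈ hLfin.toFinset, (((({p0} : Finset Sub).filter (· ≤ l)).card : ℤ) - 1)
        * kk G l = 0 := by
      refine Finset.sum_eq_zero fun l hl => ?_
      have : ({p0} : Finset Sub).filter (· ≤ l) = {p0} := by
        refine Finset.filter_true_of_mem fun q hq => ?_
        rw [Finset.mem_singleton] at hq
        exact hq ▸ hLS l ((hLT l).mp hl)
      rw [this, Finset.card_singleton]
      ring
    rw [hz, Finset.sum_singleton, kk, hmult]
    ring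
  · -- 𝒫 = ∅
    have hPT : ∀ p, p ∈ (∅ : Finset Sub) ↔ p ∈ arrPoints G := by
      intro p
      simp only [Finset.notMem_empty, false_iff]
      intro hp
      exact hp0P ((hPsub p hp) ▸ hp)
    by_cases hn1 : n = 1
    · -- no lines at all
      subst hn1
      have hLT : ∀ l, l ∈ (∅ : Finset Sub) ↔ l ∈ arrLines G := by
        intro l
        simp only [Finset.notMem_empty, false_iff]
        intro hl
        have := (mem_lines_iff.mp hl).2
        have := multF_le G l
        omega
      rw [arrDegree_finset hG3 hGinj hLT hPT]
      simp
    · -- n ≥ 2 : there is a common line l*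
      have hn2 : 2 ≤ n := by omega
      have hlstar : ∃ ls : Sub, finrank ℂ ls = 2 ∧ ∀ i, ls ≤ G i := by
        by_cases hn3 : 3 ≤ n
        · have hnp : ¬ (finrank ℂ p0 = 1 ∧ 3 ≤ multF G p0 ∧
              ¬ ∃ l : Sub, finrank ℂ l = 2 ∧ ∀ i, p0 ≤ G i → l ≤ G i) := by
            rw [← mem_points_iff]; exact hp0P
          push_neg at hnp
          obtain ⟨l, hl2, hl⟩ := hnp hp01 (by omega : 3 ≤ multF G p0)
          exact ⟨l, hl2, fun i => hl i (hball i)⟩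
        · -- n = 2
          have hn2' : n = 2 := by omega
          subst hn2'
          refine ⟨G 0 ⊓ G 1, inf_planes (hG3 0) (hG3 1)
            (fun h => (by omega : (0 : Fin 2) ≠ 1) (hGinj h)), ?_⟩
          intro i
          fin_cases i
          · exact inf_le_left
          · exact inf_le_right
      obtain ⟨ls, hls2, hlsle⟩ := hlstar
      have hlines : ∀ l ∈ arrLines G, l = ls := by
        intro l hl
        obtain ⟨i, j, hij, hrep⟩ := line_rep hG3 hGinj hl
        refine (line_eq_line hls2 (mem_lines_iff.mp hl).1 ?_).symm
        rw [hrep]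
        exact le_inf (hlsle i) (hlsle j)
      have hlsmem : ls ∈ arrLines G := by
        refine mem_lines_iff.mpr ⟨hls2, ?_⟩
        have : (Finset.univ.filter fun i => ls ≤ G i) = Finset.univ :=
          Finset.filter_true_of_mem fun i _ => hlsle i
        rw [multF, this, Finset.card_univ, Fintype.card_fin]
        omega
      have hLT : ∀ l, l ∈ ({ls} : Finset Sub) ↔ l ∈ arrLines G := by
        intro l
        simp only [Finset.mem_singleton]
        exact ⟨fun h => h ▸ hlsmem, fun h => hlines l h⟩
      rw [arrDegree_finset hG3 hGinj hLT hPT]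
      have hmls : multF G ls = n := by
        rw [multF, Finset.filter_true_of_mem (fun i _ => hlsle i), Finset.card_univ,
          Fintype.card_fin]
      rw [Finset.sum_empty, Finset.sum_singleton, Finset.filter_empty,
        Finset.card_empty, kk, hmls]
      ring

section deletion

variable {m : ℕ} {G : Fin (m + 1) → Sub} (hG3 : ∀ i, finrank ℂ (G i) = 3)
  (hGinj : Function.Injective G) (i₀ : Fin (m + 1))

/-- the arrangement with the plane `G i₀` deleted -/
def delArr {m : ℕ} (G : Fin (m + 1) → Sub) (i₀ : Fin (m + 1)) : Fin m → Sub :=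
  fun j => G (i₀.succAbove j)

include hG3 in
lemma delArr_rank3 : ∀ j, finrank ℂ (delArr G i₀ j) = 3 := fun j => hG3 _

include hGinj in
lemma delArr_inj : Function.Injective (delArr G i₀) := fun a b h =>
  Fin.succAbove_right_injective (hGinj h)

/-- multiplicity drops by exactly the indicator of containment in `G i₀` -/
lemma multF_del (W : Sub) :
    multF G W = multF (delArr G i₀) W + (if W ≤ G i₀ then 1 else 0) := by
  classical
  rw [multF, multF, Finset.card_filter, Finset.card_filter,
    Fin.sum_univ_succAbove (fun i => if W ≤ G i then 1 else 0) i₀]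
  rw [add_comm]
  rfl

lemma kk_del (W : Sub) :
    (kk G W : ℤ) = kk (delArr G i₀) W + (if W ≤ G i₀ then 1 else 0) := by
  rw [kk, kk, multF_del (G := G) i₀ W]
  split <;> push_cast <;> ring

include hG3 hGinj in
lemma lines_del_sub {l : Sub} (hl : l ∈ arrLines (delArr G i₀)) : l ∈ arrLines G := by
  obtain ⟨h2, hm⟩ := mem_lines_iff.mp hl
  refine mem_lines_iff.mpr ⟨h2, ?_⟩
  have := multF_del (G := G) i₀ l
  omega

include hG3 hGinj in
lemma points_del_sub {p : Sub} (hp : p ∈ arrPoints (delArr G i₀)) :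
    p ∈ arrPoints G := by
  obtain ⟨h1, hm, hnp⟩ := mem_points_iff.mp hp
  refine mem_points_iff.mpr ⟨h1, ?_, ?_⟩
  · have := multF_del (G := G) i₀ p
    omega
  · rintro ⟨l, hl2, hall⟩
    exact hnp ⟨l, hl2, fun j hpj => hall _ hpj⟩

include hG3 hGinj in
lemma points_del_mem {p : Sub} (hnle : ¬ p ≤ G i₀) (hp : p ∈ arrPoints G) :
    p ∈ arrPoints (delArr G i₀) := by
  obtain ⟨h1, hm, hnp⟩ := mem_points_iff.mp hp
  refine mem_points_iff.mpr ⟨h1, ?_, ?_⟩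
  · have := multF_del (G := G) i₀ p
    rw [if_neg hnle] at this
    omega
  · rintro ⟨l, hl2, hall⟩
    refine hnp ⟨l, hl2, fun i hpi => ?_⟩
    have hii : i ≠ i₀ := fun h => hnle (h ▸ hpi)
    obtain ⟨j, hj⟩ := Fin.exists_succAbove_eq hii
    have := hall j (show p ≤ G (i₀.succAbove j) by rw [hj]; exact hpi)
    show l ≤ G i
    rw [← hj]
    exact this

variable {LT LT' PT PT' : Finset Sub}
  (hLT : ∀ l, l ∈ LT ↔ l ∈ arrLines G)
  (hLT' : ∀ l, l ∈ LT' ↔ l ∈ arrLines (delArr G i₀))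
  (hPT : ∀ p, p ∈ PT ↔ p ∈ arrPoints G)
  (hPT' : ∀ p, p ∈ PT' ↔ p ∈ arrPoints (delArr G i₀))

include hG3 hGinj hLT hLT' in
lemma LT'_sub : LT' ⊆ LT := fun l hl =>
  (hLT l).mpr (lines_del_sub hG3 hGinj i₀ ((hLT' l).mp hl))

include hG3 hGinj hPT hPT' in
lemma PT'_sub : PT' ⊆ PT := fun p hp =>
  (hPT p).mpr (points_del_sub hG3 hGinj i₀ ((hPT' p).mp hp))

include hG3 hGinj hLT hLT' in
/-- vanishing of deleted-multiplicity terms off `LT'` -/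
lemma kk_del_vanish {l : Sub} (hl : l ∈ LT) (hl' : l ∉ LT') :
    kk (delArr G i₀) l = 0 := by
  obtain ⟨h2, hm⟩ := mem_lines_iff.mp ((hLT l).mp hl)
  have hnm : ¬ (2 ≤ multF (delArr G i₀) l) := by
    intro h
    exact hl' ((hLT' l).mpr (mem_lines_iff.mpr ⟨h2, h⟩))
  have := multF_del (G := G) i₀ l
  rw [kk]
  split at this <;> omega

include hG3 hGinj hLT hLT' in
/-- (D1): the drop of `S = ∑ (k_l - 1)` upon deletion is `L_H` -/
lemma S_del :
    ∑ l ∈ LT, kk G l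
      = (∑ l ∈ LT', kk (delArr G i₀) l) + ((LT.filter (· ≤ G i₀)).card : ℤ) := by
  classical
  have stepa : ∑ l ∈ LT, kk G l
      = (∑ l ∈ LT, kk (delArr G i₀) l) + ∑ l ∈ LT, (if l ≤ G i₀ then (1:ℤ) else 0) := by
    rw [← Finset.sum_add_distrib]
    exact Finset.sum_congr rfl fun l _ => kk_del i₀ l
  have stepb : ∑ l ∈ LT, kk (delArr G i₀) l = ∑ l ∈ LT', kk (delArr G i₀) l := by
    refine (Finset.sum_subset (LT'_sub hG3 hGinj i₀ hLT hLT') ?_).symm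
    intro l hl hl'
    exact kk_del_vanish hG3 hGinj i₀ hLT hLT' hl hl'
  rw [stepa, stepb, Finset.sum_boole]

include hG3 hGinj hLT hLT' in
/-- (D4'): analogous relation for `s_p` with `c_p` lines through `p` in `G i₀` -/
lemma sZ_del (p : Sub) :
    sZ G LT p = sZ (delArr G i₀) LT' p
      + ((LT.filter fun l => p ≤ l ∧ l ≤ G i₀).card : ℤ) := by
  classical
  have stepa : ∑ l ∈ LT.filter (fun l => p ≤ l), kk G l
      = (∑ l ∈ LT.filter (fun l => p ≤ l), kk (delArr G i₀) l)
        + ∑ l ∈ LT.filter (fun l => p ≤ l), (if l ≤ G i₀ then (1:ℤ) else 0) := by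
    rw [← Finset.sum_add_distrib]
    exact Finset.sum_congr rfl fun l _ => kk_del i₀ l
  have stepb : ∑ l ∈ LT.filter (fun l => p ≤ l), kk (delArr G i₀) l
      = ∑ l ∈ LT'.filter (fun l => p ≤ l), kk (delArr G i₀) l := by
    refine (Finset.sum_subset
      (Finset.filter_subset_filter _ (LT'_sub hG3 hGinj i₀ hLT hLT')) ?_).symm
    intro l hl hl'
    refine kk_del_vanish hG3 hGinj i₀ hLT hLT' (Finset.mem_filter.mp hl).1 fun hmem => ?_
    exact hl' (Finset.mem_filter.mpr ⟨hmem, (Finset.mem_filter.mp hl).2⟩)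
  rw [sZ, sZ, stepa, stepb]
  congr 1
  rw [Finset.sum_boole, Finset.filter_filter]

include hG3 hGinj hLT hLT' in
lemma mZ_del (p : Sub) :
    mZ G LT p - mZ (delArr G i₀) LT' p
      = ((LT.filter fun l => p ≤ l ∧ l ≤ G i₀).card : ℤ)
        - (if p ≤ G i₀ then 1 else 0) := by
  rw [mZ, mZ, sZ_del hG3 hGinj i₀ hLT hLT' p, kk_del i₀ p]
  ring

/-- the weight of a point in the deletion argument -/
def wgt {m : ℕ} (G : Fin (m + 1) → Sub) (i₀ : Fin (m + 1)) (LT PT' : Finset Sub)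
    (p : Sub) : ℤ :=
  if p ∈ PT' then ((LT.filter fun l => p ≤ l ∧ l ≤ G i₀).card : ℤ)
      - (if p ≤ G i₀ then 1 else 0)
  else mZ G LT p

include hG3 hGinj hLT hLT' hPT hPT' in
/-- (D5): the change of the degree under deletion -/
lemma degree_del :
    arrDegree G = arrDegree (delArr G i₀) + 1 - ((LT.filter (· ≤ G i₀)).card : ℤ)
      + ∑ p ∈ PT, wgt G i₀ LT PT' p := by
  classical
  have hPsub := PT'_sub hG3 hGinj i₀ hPT hPT'
  rw [degree_mform hG3 hGinj hLT hPT,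
      degree_mform (delArr_rank3 hG3 i₀) (delArr_inj hGinj i₀) hLT' hPT']
  have hS := S_del hG3 hGinj i₀ hLT hLT'
  have hsd : ∑ p ∈ PT \ PT', mZ G LT p + ∑ p ∈ PT', mZ G LT p
      = ∑ p ∈ PT, mZ G LT p := Finset.sum_sdiff hPsub
  have hwsd : ∑ p ∈ PT \ PT', wgt G i₀ LT PT' p + ∑ p ∈ PT', wgt G i₀ LT PT' p
      = ∑ p ∈ PT, wgt G i₀ LT PT' p := Finset.sum_sdiff hPsub
  have h1 : ∑ p ∈ PT \ PT', wgt G i₀ LT PT' p = ∑ p ∈ PT \ PT', mZ G LT p := by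
    refine Finset.sum_congr rfl fun p hp => ?_
    rw [wgt, if_neg (Finset.mem_sdiff.mp hp).2]
  have h2 : ∑ p ∈ PT', wgt G i₀ LT PT' p
      = (∑ p ∈ PT', mZ G LT p) - ∑ p ∈ PT', mZ (delArr G i₀) LT' p := by
    rw [← Finset.sum_sub_distrib]
    refine Finset.sum_congr rfl fun p hp => ?_
    rw [wgt, if_pos hp]
    exact (mZ_del hG3 hGinj i₀ hLT hLT' p).symm
  push_cast
  linarith

section positivity

variable (hess : (⨅ i, G i) = ⊥) (hm : 1 ≤ m)

include hG3 hGinj hLT hPT hPT' in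
lemma wgt_nonneg {p : Sub} (hp : p ∈ PT) : 0 ≤ wgt G i₀ LT PT' p := by
  classical
  rw [wgt]
  by_cases hp' : p ∈ PT'
  · rw [if_pos hp']
    by_cases hple : p ≤ G i₀
    · rw [if_pos hple]
      have h1 : 1 ≤ (LT.filter fun l => p ≤ l ∧ l ≤ G i₀).card := by
        have hp3 : 3 ≤ multF (delArr G i₀) p :=
          (mem_points_iff.mp ((hPT' p).mp hp')).2.1
        obtain ⟨j, hj⟩ := Finset.card_pos.mp
          (lt_of_lt_of_le (by norm_num) hp3 :
            0 < (Finset.univ.filter fun j => p ≤ delArr G i₀ j).card)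
        have hpj : p ≤ G (i₀.succAbove j) := le_of_mem_multset (G := delArr G i₀) hj
        have hne : i₀.succAbove j ≠ i₀ := Fin.succAbove_ne i₀ j
        refine Finset.card_pos.mpr ⟨G (i₀.succAbove j) ⊓ G i₀, ?_⟩
        rw [Finset.mem_filter]
        exact ⟨(hLT _).mpr (inf_mem_lines hG3 hGinj hne), le_inf hpj hple, inf_le_right⟩
      push_cast
      omega
    · rw [if_neg hple]
      simp
  · rw [if_neg hp']
    exact zero_le_mZ hG3 hGinj hLT ((hPT p).mp hp)

include hG3 hGinj hLT hPT hPT' in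
/-- Singular points of the induced arrangement in `G i₀` belong to `𝒫` and
their weight is at least `c_p - 1`. -/
lemma sing_wgt {p : Sub} (hp1 : finrank ℂ p = 1) (hple : p ≤ G i₀)
    (h2 : 2 ≤ (LT.filter fun l => p ≤ l ∧ l ≤ G i₀).card) :
    p ∈ PT ∧ ((LT.filter fun l => p ≤ l ∧ l ≤ G i₀).card : ℤ) - 1
      ≤ wgt G i₀ LT PT' p := by
  classical
  obtain ⟨l₁, hl₁, l₂, hl₂, hne⟩ := Finset.one_lt_card.mp h2
  rw [Finset.mem_filter] at hl₁ hl₂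
  obtain ⟨hl₁LT, hpl₁, hl₁i₀⟩ := hl₁
  obtain ⟨hl₂LT, hpl₂, hl₂i₀⟩ := hl₂
  have hl₁L := (hLT l₁).mp hl₁LT
  have hl₂L := (hLT l₂).mp hl₂LT
  have hl₁2 := (mem_lines_iff.mp hl₁L).1
  have hl₂2 := (mem_lines_iff.mp hl₂L).1
  -- indices j₁ j₂ off i₀ carrying l₁ l₂
  have hidx : ∀ l : Sub, l ∈ LT → l ≤ G i₀ → ∃ j, j ≠ i₀ ∧ l ≤ G j := by
    intro l hl hli
    obtain ⟨a, b, hab, ha, hb⟩ := two_le_mult_iff (mem_lines_iff.mp ((hLT l).mp hl)).2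
    by_cases hai : a = i₀
    · exact ⟨b, fun h => hab (hai.trans h.symm), hb⟩
    · exact ⟨a, hai, ha⟩
  obtain ⟨j₁, hj₁ne, hj₁⟩ := hidx l₁ hl₁LT hl₁i₀
  obtain ⟨j₂, hj₂ne, hj₂⟩ := hidx l₂ hl₂LT hl₂i₀
  have hj₁₂ : j₁ ≠ j₂ := by
    intro h
    subst h
    -- l₁ ⊔ l₂ would be all of G i₀ and of G j₁
    have hinf : finrank ℂ ↥(l₁ ⊓ l₂) = 1 :=
      lines_in_plane_inf hl₁2 hl₂2 hne (hG3 i₀) hl₁i₀ hl₂i₀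
    have hsup : finrank ℂ ↥(l₁ ⊔ l₂) = 3 := by
      have := sup_add_inf l₁ l₂
      omega
    have e1 : l₁ ⊔ l₂ = G i₀ :=
      Submodule.eq_of_le_of_finrank_le (sup_le hl₁i₀ hl₂i₀) (by rw [hsup, hG3])
    have e2 : l₁ ⊔ l₂ = G j₁ :=
      Submodule.eq_of_le_of_finrank_le (sup_le hj₁ hj₂) (by rw [hsup, hG3])
    exact hj₁ne (hGinj (e2 ▸ e1).symm ▸ rfl)
  have hp3 : 3 ≤ multF G p := by
    rw [multF]
    have hsub : ({i₀, j₁, j₂} : Finset (Fin (m+1)))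
        ⊆ Finset.univ.filter fun i => p ≤ G i := by
      intro i hi
      simp only [Finset.mem_insert, Finset.mem_singleton] at hi
      rw [Finset.mem_filter]
      refine ⟨Finset.mem_univ _, ?_⟩
      rcases hi with h | h | h
      · exact h ▸ hple
      · exact h ▸ (hpl₁.trans hj₁)
      · exact h ▸ (hpl₂.trans hj₂)
    refine le_trans (le_of_eq ?_) (Finset.card_le_card hsub)
    rw [Finset.card_insert_of_notMem (by simp [Ne.symm hj₁ne, Ne.symm hj₂ne]),
      Finset.card_insert_of_notMem (by simp [hj₁₂]), Finset.card_singleton]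
  have hpPts : p ∈ arrPoints G := mem_points_iff.mpr
    ⟨hp1, hp3, nonpencil_of_two_lines hG3 hGinj hl₁L hl₂L (by
      intro h
      exact hne (h ▸ rfl)) hpl₁ hpl₂⟩
  refine ⟨(hPT p).mpr hpPts, ?_⟩
  rw [wgt]
  by_cases hp' : p ∈ PT'
  · rw [if_pos hp', if_pos hple]
  · rw [if_neg hp']
    exact mZ_ge_c_sub_one hG3 hGinj hLT hp1 hj₁ne (hpl₁.trans hj₁)

include hG3 hGinj hLT hess hm in
/-- essentialness provides a line `l₀` in `G i₀` and a singular point `q₀` off it -/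
lemma exists_l0_q0 :
    ∃ q₀ l₀ : Sub, finrank ℂ q₀ = 1 ∧ q₀ ≤ G i₀
      ∧ 2 ≤ (LT.filter fun l => q₀ ≤ l ∧ l ≤ G i₀).card
      ∧ l₀ ∈ LT ∧ l₀ ≤ G i₀ ∧ ¬ q₀ ≤ l₀ := by
  classical
  have hLmem : ∀ i, i ≠ i₀ → G i ⊓ G i₀ ∈ LT ∧ G i ⊓ G i₀ ≤ G i₀ :=
    fun i hi => ⟨(hLT _).mpr (inf_mem_lines hG3 hGinj hi), inf_le_right⟩
  -- two distinct lines in G i₀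
  have htwo : ∃ l₁ ∈ LT, ∃ l₂ ∈ LT, l₁ ≤ G i₀ ∧ l₂ ≤ G i₀ ∧ l₁ ≠ l₂ := by
    by_contra hcon
    push_neg at hcon
    set jA : Fin (m + 1) := i₀.succAbove ⟨0, hm⟩ with hjA
    have hjAne : jA ≠ i₀ := Fin.succAbove_ne i₀ _
    obtain ⟨hlA, hlAle⟩ := hLmem jA hjAne
    have hall : ∀ i, G jA ⊓ G i₀ ≤ G i := by
      intro i
      by_cases hi : i = i₀
      · exact hi ▸ inf_le_right
      · obtain ⟨hmem, hle⟩ := hLmem i hi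
        have := hcon _ hlA _ hmem hlAle hle
        rw [this]
        exact inf_le_left
    have hbot : G jA ⊓ G i₀ ≤ ⊥ := hess ▸ le_iInf hall
    have h2 : finrank ℂ ↥(G jA ⊓ G i₀) = 2 :=
      inf_planes (hG3 jA) (hG3 i₀) (fun h => hjAne (hGinj h))
    have := Submodule.finrank_mono hbot
    rw [finrank_bot] at this
    omega
  obtain ⟨l₁, hl₁, l₂, hl₂, hl₁le, hl₂le, hne⟩ := htwo
  have hl₁2 := (mem_lines_iff.mp ((hLT l₁).mp hl₁)).1
  have hl₂2 := (mem_lines_iff.mp ((hLT l₂).mp hl₂)).1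
  set q₀ := l₁ ⊓ l₂ with hq₀
  have hq₀1 : finrank ℂ q₀ = 1 := lines_in_plane_inf hl₁2 hl₂2 hne (hG3 i₀) hl₁le hl₂le
  have hq₀le : q₀ ≤ G i₀ := inf_le_left.trans hl₁le
  have hq₀c : 2 ≤ (LT.filter fun l => q₀ ≤ l ∧ l ≤ G i₀).card := by
    apply Finset.one_lt_card.mpr
    refine ⟨l₁, ?_, l₂, ?_, hne⟩
    · rw [Finset.mem_filter]; exact ⟨hl₁, inf_le_left, hl₁le⟩
    · rw [Finset.mem_filter]; exact ⟨hl₂, inf_le_right, hl₂le⟩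
  -- a line in G i₀ avoiding q₀
  have hl₀ : ∃ l₀ ∈ LT, l₀ ≤ G i₀ ∧ ¬ q₀ ≤ l₀ := by
    by_contra hcon
    push_neg at hcon
    have hall : ∀ i, q₀ ≤ G i := by
      intro i
      by_cases hi : i = i₀
      · exact hi ▸ hq₀le
      · obtain ⟨hmem, hle⟩ := hLmem i hi
        exact (hcon _ hmem hle).trans inf_le_left
    have hbot : q₀ ≤ ⊥ := hess ▸ le_iInf hall
    have := Submodule.finrank_mono hbot
    rw [finrank_bot] at this
    omega
  obtain ⟨l₀, hl₀LT, hl₀le, hq₀l₀⟩ := hl₀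
  exact ⟨q₀, l₀, hq₀1, hq₀le, hq₀c, hl₀LT, hl₀le, hq₀l₀⟩

include hG3 hGinj hLT hPT hPT' hess hm in
/-- (D6): the total weight dominates the number of lines in `G i₀`. -/
lemma wgt_sum_ge :
    ((LT.filter (· ≤ G i₀)).card : ℤ) ≤ ∑ p ∈ PT, wgt G i₀ LT PT' p := by
  classical
  obtain ⟨q₀, l₀, hq₀1, hq₀le, hq₀c, hl₀LT, hl₀le, hq₀l₀⟩ :=
    exists_l0_q0 hG3 hGinj i₀ hLT hess hm
  set LTH := LT.filter (· ≤ G i₀) with hLTH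
  set B := (LTH.erase l₀).image (· ⊓ l₀) with hB
  -- properties of points of B
  have hBprops : ∀ p ∈ B, finrank ℂ p = 1 ∧ p ≤ G i₀ ∧ p ≤ l₀
      ∧ 2 ≤ (LT.filter fun l => p ≤ l ∧ l ≤ G i₀).card := by
    intro p hp
    rw [hB] at hp
    obtain ⟨l, hl, hlp⟩ := Finset.mem_image.mp hp
    have hlne : l ≠ l₀ := Finset.ne_of_mem_erase hl
    have hlLTH := Finset.mem_of_mem_erase hl
    rw [hLTH, Finset.mem_filter] at hlLTH
    obtain ⟨hlLT, hlle⟩ := hlLTH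
    have hl2 := (mem_lines_iff.mp ((hLT l).mp hlLT)).1
    have hl₀2 := (mem_lines_iff.mp ((hLT l₀).mp hl₀LT)).1
    have hp1 : finrank ℂ p = 1 := by
      rw [← hlp]
      exact lines_in_plane_inf hl2 hl₀2 hlne (hG3 i₀) hlle hl₀le
    have hppl : p ≤ l := hlp ▸ inf_le_left
    have hppl₀ : p ≤ l₀ := hlp ▸ inf_le_right
    refine ⟨hp1, hppl₀.trans hl₀le, hppl₀, ?_⟩
    apply Finset.one_lt_card.mpr
    refine ⟨l, ?_, l₀, ?_, hlne⟩
    · rw [Finset.mem_filter]; exact ⟨hlLT, hppl, hlle⟩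
    · rw [Finset.mem_filter]; exact ⟨hl₀LT, hppl₀, hl₀le⟩
  -- fiber counting along l₀  (in ℕ)
  have hcount : (LTH.erase l₀).card
      ≤ ∑ p ∈ B, ((LT.filter fun l => p ≤ l ∧ l ≤ G i₀).card - 1) := by
    rw [Finset.card_eq_sum_card_image (· ⊓ l₀) (LTH.erase l₀)]
    rw [← hB]
    refine Finset.sum_le_sum fun p hp => ?_
    have hfib : (LTH.erase l₀).filter (fun l => l ⊓ l₀ = p)
        ⊆ (LT.filter fun l => p ≤ l ∧ l ≤ G i₀).erase l₀ := by
      intro l hl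
      rw [Finset.mem_filter] at hl
      obtain ⟨hl, hlp⟩ := hl
      have hlne : l ≠ l₀ := Finset.ne_of_mem_erase hl
      have hlLTH := Finset.mem_of_mem_erase hl
      rw [hLTH, Finset.mem_filter] at hlLTH
      rw [Finset.mem_erase, Finset.mem_filter]
      exact ⟨hlne, hlLTH.1, hlp ▸ inf_le_left, hlLTH.2⟩
    have hl₀mem : l₀ ∈ LT.filter fun l => p ≤ l ∧ l ≤ G i₀ := by
      rw [Finset.mem_filter]
      exact ⟨hl₀LT, (hBprops p hp).2.2.1, hl₀le⟩
    calc ((LTH.erase l₀).filter (fun l => l ⊓ l₀ = p)).card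
        ≤ ((LT.filter fun l => p ≤ l ∧ l ≤ G i₀).erase l₀).card :=
          Finset.card_le_card hfib
      _ = (LT.filter fun l => p ≤ l ∧ l ≤ G i₀).card - 1 :=
          Finset.card_erase_of_mem hl₀mem
  -- cast to ℤ and conclude
  have hq₀B : q₀ ∉ B := fun h => hq₀l₀ (hBprops q₀ h).2.2.1
  have hBPT : ∀ p ∈ B, p ∈ PT := fun p hp =>
    (sing_wgt hG3 hGinj i₀ hLT hPT hPT' (hBprops p hp).1 (hBprops p hp).2.1
      (hBprops p hp).2.2.2).1
  have hq₀PT : q₀ ∈ PT :=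
    (sing_wgt hG3 hGinj i₀ hLT hPT hPT' hq₀1 hq₀le hq₀c).1
  have hBsub : insert q₀ B ⊆ PT := by
    intro p hp
    rcases Finset.mem_insert.mp hp with h | h
    · exact h ▸ hq₀PT
    · exact hBPT p h
  have step1 : ∑ p ∈ insert q₀ B, wgt G i₀ LT PT' p ≤ ∑ p ∈ PT, wgt G i₀ LT PT' p :=
    Finset.sum_le_sum_of_subset_of_nonneg hBsub fun p hp _ =>
      wgt_nonneg hG3 hGinj i₀ hLT hPT hPT' hp
  have step2 : ∑ p ∈ B, (((LT.filter fun l => p ≤ l ∧ l ≤ G i₀).card : ℤ) - 1)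
      ≤ ∑ p ∈ B, wgt G i₀ LT PT' p :=
    Finset.sum_le_sum fun p hp =>
      (sing_wgt hG3 hGinj i₀ hLT hPT hPT' (hBprops p hp).1 (hBprops p hp).2.1
        (hBprops p hp).2.2.2).2
  have step3 : ((LTH.erase l₀).card : ℤ)
      ≤ ∑ p ∈ B, (((LT.filter fun l => p ≤ l ∧ l ≤ G i₀).card : ℤ) - 1) := by
    calc ((LTH.erase l₀).card : ℤ)
        ≤ ((∑ p ∈ B, ((LT.filter fun l => p ≤ l ∧ l ≤ G i₀).card - 1) : ℕ) : ℤ) := by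
          exact_mod_cast hcount
      _ = ∑ p ∈ B, (((LT.filter fun l => p ≤ l ∧ l ≤ G i₀).card - 1 : ℕ) : ℤ) := by
          rw [Nat.cast_sum]
      _ ≤ ∑ p ∈ B, (((LT.filter fun l => p ≤ l ∧ l ≤ G i₀).card : ℤ) - 1) := by
          refine Finset.sum_le_sum fun p hp => ?_
          have := (hBprops p hp).2.2.2
          omega
  have step4 : ((LT.filter (· ≤ G i₀)).card : ℤ) - 1 = ((LTH.erase l₀).card : ℤ) := by
    rw [Finset.card_erase_of_mem (by rw [hLTH, Finset.mem_filter]; exact ⟨hl₀LT, hl₀le⟩)]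
    have : 1 ≤ LTH.card := Finset.card_pos.mpr
      ⟨l₀, by rw [hLTH, Finset.mem_filter]; exact ⟨hl₀LT, hl₀le⟩⟩
    rw [hLTH] at this ⊢
    omega
  have step5 : 2 - 1 ≤ wgt G i₀ LT PT' q₀ := by
    have := (sing_wgt hG3 hGinj i₀ hLT hPT hPT' hq₀1 hq₀le hq₀c).2
    have h2 : (2 : ℤ) ≤ ((LT.filter fun l => q₀ ≤ l ∧ l ≤ G i₀).card : ℤ) := by
      exact_mod_cast hq₀c
    linarith only [this, h2]
  have hins : ∑ p ∈ insert q₀ B, wgt G i₀ LT PT' p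
      = wgt G i₀ LT PT' q₀ + ∑ p ∈ B, wgt G i₀ LT PT' p :=
    Finset.sum_insert hq₀B
  linarith only [step1, step2, step3, step4, step5, hins]

end positivity

include hG3 hGinj hLT hLT' hPT hPT' in
/-- THE DELETION LEMMA: for an essential arrangement, deleting a plane drops
the degree by at least 1. -/
lemma deletion_lemma (hess : (⨅ i, G i) = ⊥) (hm : 1 ≤ m) :
    arrDegree (delArr G i₀) + 1 ≤ arrDegree G := by
  have hD := degree_del hG3 hGinj i₀ hLT hLT' hPT hPT'
  have hW := wgt_sum_ge hG3 hGinj i₀ hLT hPT hPT' hess hm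
  linarith

include hG3 hGinj in
/-- deletion lemma, instantiated -/
lemma deletion_lemma' (hess : (⨅ i, G i) = ⊥) (hm : 1 ≤ m) :
    arrDegree (delArr G i₀) + 1 ≤ arrDegree G := by
  classical
  exact deletion_lemma hG3 hGinj i₀
    (fun l => Set.Finite.mem_toFinset (lines_finite hG3 hGinj))
    (fun l => Set.Finite.mem_toFinset
      (lines_finite (delArr_rank3 hG3 i₀) (delArr_inj hGinj i₀)))
    (fun p => Set.Finite.mem_toFinset (points_finite hG3 hGinj))
    (fun p => Set.Finite.mem_toFinset
      (points_finite (delArr_rank3 hG3 i₀) (delArr_inj hGinj i₀)))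
    hess hm

end deletion

/-- an essential arrangement contains at most 4 planes cutting out `⊥` -/
lemma exists_small_essential {n : ℕ} (f : Fin n → Sub) (hess : (⨅ i, f i) = ⊥) :
    ∃ s : Finset (Fin n), s.card ≤ 4 ∧ (⨅ i ∈ s, f i) = ⊥ := by
  classical
  have aux : ∀ k : ℕ, ∀ s : Finset (Fin n), finrank ℂ ↥(⨅ i ∈ s, f i) ≤ k →
      ∃ t : Finset (Fin n), t.card ≤ s.card + k ∧ (⨅ i ∈ t, f i) = ⊥ := by
    intro k
    induction k with
    | zero =>
      intro s hs
      exact ⟨s, by omega, Submodule.finrank_eq_zero.mp (by omega)⟩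
    | succ k IHk =>
      intro s hs
      by_cases hbot : (⨅ i ∈ s, f i) = ⊥
      · exact ⟨s, by omega, hbot⟩
      · have : ∃ i, ¬ (⨅ i ∈ s, f i) ≤ f i := by
          by_contra h
          push_neg at h
          exact hbot (le_bot_iff.mp (hess ▸ le_iInf h))
        obtain ⟨i, hi⟩ := this
        have hlt : (⨅ j ∈ insert i s, f j) < ⨅ j ∈ s, f j := by
          rw [Finset.iInf_insert]
          refine lt_of_le_of_ne inf_le_right fun h => ?_
          exact hi (h ▸ inf_le_left)
        have hfr := Submodule.finrank_lt_finrank_of_lt hlt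
        obtain ⟨t, htc, htb⟩ := IHk (insert i s) (by omega)
        exact ⟨t, le_trans htc (by
          have := Finset.card_insert_le i s
          omega), htb⟩
  have h0 : finrank ℂ ↥(⨅ i ∈ (∅ : Finset (Fin n)), f i) ≤ 4 := fr_le4 _
  obtain ⟨t, htc, htb⟩ := aux 4 ∅ h0
  exact ⟨t, by simpa using htc, htb⟩

/-- MAIN INDUCTION: an essential arrangement has degree at least `n - 3`. -/
lemma ess_bound : ∀ n : ℕ, ∀ G : Fin n → Sub, (∀ i, finrank ℂ (G i) = 3) →
    Function.Injective G → (⨅ i, G i) = ⊥ → (n : ℤ) - 3 ≤ arrDegree G := by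
  intro n
  induction n using Nat.strong_induction_on with
  | _ n IH =>
    intro G hG3 hGinj hess
    have h4 : 4 ≤ n := essential_four_le G hG3 hess
    obtain ⟨m, rfl⟩ : ∃ m, n = m + 1 := ⟨n - 1, by omega⟩
    by_cases h5 : 5 ≤ m + 1
    · -- delete a redundant plane, keeping essentialness
      obtain ⟨s, hs4, hsbot⟩ := exists_small_essential G hess
      have hex : ∃ i₀, i₀ ∉ s := by
        by_contra h
        push_neg at h
        have : (Finset.univ : Finset (Fin (m+1))) ⊆ s := fun i _ => h i
        have := Finset.card_le_card this
        rw [Finset.card_univ] at this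
        simp only [Fintype.card_fin] at this
        omega
      obtain ⟨i₀, hi₀⟩ := hex
      have hess' : (⨅ j, delArr G i₀ j) = ⊥ := by
        rw [← le_bot_iff, ← hsbot]
        refine le_iInf fun i => le_iInf fun hi => ?_
        have hne : i ≠ i₀ := fun h => hi₀ (h ▸ hi)
        obtain ⟨j, hj⟩ := Fin.exists_succAbove_eq hne
        rw [← hj]
        exact iInf_le _ j
      have hIH := IH m (by omega) (delArr G i₀) (delArr_rank3 hG3 i₀)
        (delArr_inj hGinj i₀) hess'
      have hdel := deletion_lemma' hG3 hGinj i₀ hess (by omega)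
      push_cast
      push_cast at hIH
      linarith
    · -- n = 4 : deletion gives a non-essential 3-plane arrangement of degree 0
      have hm3 : m = 3 := by omega
      have hness' : (⨅ j, delArr G (0 : Fin (m+1)) j) ≠ ⊥ := by
        intro h
        have := essential_four_le _ (delArr_rank3 hG3 0) h
        omega
      have h0 := degree_of_nonessential (delArr_rank3 hG3 0) (delArr_inj hGinj 0)
        (by omega) hness'
      have hdel := deletion_lemma' hG3 hGinj 0 hess (by omega)
      rw [h0] at hdel
      push_cast
      linarith

end ArrAux


open ArrAux in
/-- Theorem 5: an arrangement of `N` distinct planes in `ℙ³`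
whose polar map is birational (`d_𝒜 = 1`) consists of `N = 4` planes in
general linear position (no point lies on all four: the intersection of the
planes is zero, i.e. the four linear forms are linearly independent). -/
theorem arrDegree_eq_one_classification (N : ℕ)
    (H : Fin N → Submodule ℂ (Fin 4 → ℂ))
    (hH : ∀ i, finrank ℂ (H i) = 3) (hinj : Function.Injective H)
    (hd : arrDegree H = 1) :
    N = 4 ∧ (⨅ i, H i) = ⊥ := by
  classical
  have hess : (⨅ i, H i) = ⊥ := by
    by_contra hne
    rcases Nat.eq_zero_or_pos N with h0 | hpos
    · -- N = 0 : degree is -1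
      subst h0
      have hPT : ∀ p : Submodule ℂ (Fin 4 → ℂ),
          p ∈ (∅ : Finset (Submodule ℂ (Fin 4 → ℂ))) ↔ p ∈ arrPoints H := by
        intro p
        simp only [Finset.notMem_empty, false_iff]
        intro hp
        have := (ArrAux.mem_points_iff.mp hp).2.1
        have := multF_le H p
        omega
      have hLT : ∀ l : Submodule ℂ (Fin 4 → ℂ),
          l ∈ (∅ : Finset (Submodule ℂ (Fin 4 → ℂ))) ↔ l ∈ arrLines H := by
        intro l
        simp only [Finset.notMem_empty, false_iff]
        intro hl
        have := (ArrAux.mem_lines_iff.mp hl).2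
        have := multF_le H l
        omega
      rw [arrDegree_finset hH hinj hLT hPT] at hd
      simp at hd
    · exact absurd hd (by rw [degree_of_nonessential hH hinj hpos hne]; norm_num)
  have h4 : 4 ≤ N := essential_four_le H hH hess
  have hb := ess_bound N H hH hinj hess
  rw [hd] at hb
  exact ⟨by omega, hess⟩
end
end
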